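/- arXiv:2601.00934 — 7 statements merged into one kernel-verified Lean document; each statement's English description precedes it below -/
import Mathlib

section
/- Let X be a real Hilbert space, K ⊆ X a nonempty closed convex set, y ∈ X, and let A : K → X be Lipschitz continuous (there exists M > 0 with ‖A b₁ − A b₂‖ ≤ M‖b₁ − b₂‖ for all b₁, b₂ ∈ K) and strongly monotone (there exists m > 0 with ⟨A b₁ − A b₂, b₁ − b₂⟩ ≥ m‖b₁ − b₂‖² for all b₁, b₂ ∈ K). Let j : K → ℝ be convex and lower semicontinuous. Then there exists a unique element b ∈ K such that ⟨A b, a − b⟩ + j(a) − j(b) ≥ ⟨y, a − b⟩ for all a ∈ K. -/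
/-!
The solution is the fixed point of the forward–backward map `b ↦ P (b - ρ • A b)`, where `P`
is the proximal map of `ρ • j` on `K`. The proximal point exists because
`x ↦ ‖x - z‖ ^ 2 / 2 + ρ * j x` is strongly midpoint convex (Apollonius) and bounded below (by an
affine minorant of `j`), so its minimizing sequences are Cauchy; it is characterized by a
variational inequality, which makes `P` nonexpansive. For `ρ = m / M ^ 2` the forward step
contracts by `√(1 - ρ * m)`, so Banach's theorem gives the solution, and strong monotonicity
gives uniqueness.
-/

open Filter Topology RealInnerProductSpace

section Metric

theorem exists_isMinOn_of_midpoint_le {α : Type*} [PseudoMetricSpace α] [CompleteSpace α]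
    {K : Set α} {g : α → ℝ} (hK : K.Nonempty) (hKcl : IsClosed K)
    (hg : LowerSemicontinuousOn g K) (hbdd : BddBelow (g '' K))
    (hmid : ∀ x ∈ K, ∀ v ∈ K, ∃ w ∈ K, g w ≤ (g x + g v) / 2 - dist x v ^ 2 / 8) :
    ∃ w ∈ K, IsMinOn g K w := by
  set δ := sInf (g '' K)
  have hδ : ∀ x ∈ K, δ ≤ g x := fun x hx => csInf_le hbdd ⟨x, hx, rfl⟩
  obtain ⟨s, hs_anti, hs_lim, hs_mem⟩ := exists_seq_tendsto_sInf (hK.image g) hbdd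
  choose u hu hgu using hs_mem
  have hcauchy : CauchySeq u := by
    refine cauchySeq_of_le_tendsto_0 (fun N => √(8 * (s N - δ))) (fun n k N hn hk => ?_) ?_
    · obtain ⟨w, hwK, hw⟩ := hmid _ (hu n) _ (hu k)
      rw [← Real.sqrt_sq dist_nonneg]
      apply Real.sqrt_le_sqrt
      rw [hgu, hgu] at hw
      linarith [hδ w hwK, hs_anti hn, hs_anti hk]
    · simpa [δ] using ((hs_lim.sub_const δ).const_mul 8).sqrt
  obtain ⟨w, hw⟩ := cauchySeq_tendsto_of_complete hcauchy
  have hwK : w ∈ K := hKcl.mem_of_tendsto hw (Eventually.of_forall hu)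
  have hgw : g w ≤ δ := by
    refine le_of_forall_lt_imp_le_of_dense fun c hc => ?_
    have hlim : Tendsto u atTop (𝓝[K] w) :=
      tendsto_nhdsWithin_iff.2 ⟨hw, Eventually.of_forall hu⟩
    refine ge_of_tendsto hs_lim ?_
    filter_upwards [hlim.eventually (hg w hwK c hc)] with n hn
    exact (hgu n ▸ hn).le
  exact ⟨w, hwK, fun x hx => hgw.trans (hδ x hx)⟩

theorem LipschitzOnWith.exists_fixedPoint {α : Type*} [MetricSpace α] [CompleteSpace α]
    {K : Set α} {T : α → α} {κ : NNReal} (hK : K.Nonempty) (hKcl : IsClosed K)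
    (hT : Set.MapsTo T K K) (hκ : κ < 1) (hLip : LipschitzOnWith κ T K) :
    ∃ x ∈ K, T x = x := by
  obtain ⟨x₀, hx₀⟩ := hK
  obtain ⟨x, hxK, hx, -⟩ := ContractingWith.exists_fixedPoint' hKcl.isComplete hT
    ⟨hκ, hLip.mapsToRestrict hT⟩ hx₀ (edist_ne_top _ _)
  exact ⟨x, hxK, hx⟩

end Metric

section Hilbert

variable {X : Type*} [NormedAddCommGroup X] [InnerProductSpace ℝ X] {K : Set X} {φ : X → ℝ}

theorem ConvexOn.half_norm_sub_sq_add_midpoint_le (hφ : ConvexOn ℝ K φ) (z : X) {x v : X}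
    (hx : x ∈ K) (hv : v ∈ K) :
    ‖midpoint ℝ x v - z‖ ^ 2 / 2 + φ (midpoint ℝ x v) ≤
      ((‖x - z‖ ^ 2 / 2 + φ x) + (‖v - z‖ ^ 2 / 2 + φ v)) / 2 - ‖x - v‖ ^ 2 / 8 := by
  have hApollonius :=
    EuclideanGeometry.dist_sq_add_dist_sq_eq_two_mul_dist_midpoint_sq_add_half_dist_sq z x v
  simp only [dist_eq_norm, norm_sub_rev z] at hApollonius
  have hφmid : φ (midpoint ℝ x v) ≤ (φ x + φ v) / 2 := by
    have hmid : midpoint ℝ x v = (1 / 2 : ℝ) • x + (1 / 2 : ℝ) • v := by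
      rw [midpoint_eq_smul_add, smul_add, invOf_eq_inv, one_div]
    have := hφ.2 hx hv (by norm_num : (0 : ℝ) ≤ 1 / 2) (by norm_num : (0 : ℝ) ≤ 1 / 2) (by norm_num)
    rw [hmid]
    simp only [smul_eq_mul] at this
    linarith
  linarith

theorem exists_isMinOn_half_norm_sub_sq_add [CompleteSpace X] (hK : K.Nonempty)
    (hKcl : IsClosed K) (hKcv : Convex ℝ K) (hφ : ConvexOn ℝ K φ)
    (hφlsc : LowerSemicontinuousOn φ K) (z : X) :
    ∃ w ∈ K, IsMinOn (fun x => ‖x - z‖ ^ 2 / 2 + φ x) K w := by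
  obtain ⟨x₀, hx₀⟩ := hK
  obtain ⟨l, c, hlc, -⟩ :=
    hφ.exists_affine_le_of_lt (𝕜 := ℝ) hx₀ (sub_one_lt (φ x₀)) hKcl hφlsc
  have hminorant : ∀ x ∈ K, l x + c ≤ φ x := fun x hx => by simpa using hlc ⟨x, hx⟩
  refine exists_isMinOn_of_midpoint_le ⟨x₀, hx₀⟩ hKcl ?_ ⟨l z + c - ‖l‖ ^ 2 / 2, ?_⟩ ?_
  · exact ((continuous_id.sub continuous_const).norm.pow 2 |>.div_const 2).lowerSemicontinuous
      |>.lowerSemicontinuousOn K |>.add hφlsc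
  · rintro _ ⟨x, hx, rfl⟩
    have hl : -(‖l‖ * ‖x - z‖) ≤ l (x - z) := neg_le_of_abs_le (l.le_opNorm (x - z))
    rw [map_sub] at hl
    nlinarith [hminorant x hx, sq_nonneg (‖x - z‖ - ‖l‖)]
  · intro x hx v hv
    exact ⟨midpoint ℝ x v, hKcv.midpoint_mem hx hv, by
      simpa [dist_eq_norm] using hφ.half_norm_sub_sq_add_midpoint_le z hx hv⟩

/-- The variational characterization of `w` as the proximal point at `z` of `φ` restricted to
`K`, i.e. the minimizer of `x ↦ ‖x - z‖ ^ 2 / 2 + φ x` over `K`. -/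
def IsProxOn (K : Set X) (φ : X → ℝ) (z w : X) : Prop :=
  w ∈ K ∧ ∀ a ∈ K, 0 ≤ ⟪w - z, a - w⟫ + φ a - φ w

theorem IsMinOn.isProxOn {z w : X} (hKcv : Convex ℝ K) (hφ : ConvexOn ℝ K φ) (hw : w ∈ K)
    (hmin : IsMinOn (fun x => ‖x - z‖ ^ 2 / 2 + φ x) K w) : IsProxOn K φ z w := by
  refine ⟨hw, fun a ha => ?_⟩
  have hstep : ∀ t ∈ Set.Ioc (0 : ℝ) 1,
      -(t * ‖a - w‖ ^ 2 / 2) ≤ ⟪w - z, a - w⟫ + φ a - φ w := by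
    rintro t ⟨ht0, ht1⟩
    have hseg : w + t • (a - w) = (1 - t) • w + t • a := by module
    have hmem : w + t • (a - w) ∈ K := hseg ▸ hKcv hw ha (by linarith) ht0.le (by ring)
    have hφt : φ (w + t • (a - w)) ≤ (1 - t) * φ w + t * φ a :=
      hseg ▸ hφ.2 hw ha (by linarith) ht0.le (by ring)
    have hnorm : ‖w + t • (a - w) - z‖ ^ 2
        = ‖w - z‖ ^ 2 + 2 * t * ⟪w - z, a - w⟫ + t ^ 2 * ‖a - w‖ ^ 2 := by
      rw [show w + t • (a - w) - z = (w - z) + t • (a - w) by abel, norm_add_sq_real,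
        real_inner_smul_right, norm_smul, mul_pow, Real.norm_eq_abs, sq_abs]
      ring
    have hle : ‖w - z‖ ^ 2 / 2 + φ w ≤ ‖w + t • (a - w) - z‖ ^ 2 / 2 + φ (w + t • (a - w)) :=
      hmin hmem
    have : 0 ≤ t * (⟪w - z, a - w⟫ + φ a - φ w + t * ‖a - w‖ ^ 2 / 2) := by nlinarith
    linarith [(mul_nonneg_iff_of_pos_left ht0).1 this]
  have hlim : Tendsto (fun t : ℝ => -(t * ‖a - w‖ ^ 2 / 2)) (𝓝[>] 0) (𝓝 0) := by
    have : Continuous fun t : ℝ => -(t * ‖a - w‖ ^ 2 / 2) := by fun_prop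
    simpa using (this.tendsto 0).mono_left nhdsWithin_le_nhds
  exact le_of_tendsto hlim (eventually_of_mem (Ioc_mem_nhdsGT one_pos) hstep)

theorem exists_isProxOn [CompleteSpace X] (hK : K.Nonempty) (hKcl : IsClosed K)
    (hKcv : Convex ℝ K) (hφ : ConvexOn ℝ K φ) (hφlsc : LowerSemicontinuousOn φ K) (z : X) :
    ∃ w, IsProxOn K φ z w :=
  let ⟨w, hw, hmin⟩ := exists_isMinOn_half_norm_sub_sq_add hK hKcl hKcv hφ hφlsc z
  ⟨w, hmin.isProxOn hKcv hφ hw⟩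

theorem IsProxOn.norm_sub_le {z₁ z₂ w₁ w₂ : X} (h₁ : IsProxOn K φ z₁ w₁)
    (h₂ : IsProxOn K φ z₂ w₂) : ‖w₁ - w₂‖ ≤ ‖z₁ - z₂‖ := by
  have hfirm : ‖w₁ - w₂‖ ^ 2 ≤ ⟪z₁ - z₂, w₁ - w₂⟫ := by
    have e₁ := h₁.2 w₂ h₂.1
    have e₂ := h₂.2 w₁ h₁.1
    rw [← real_inner_self_eq_norm_sq]
    simp only [inner_sub_left, inner_sub_right, real_inner_comm] at e₁ e₂ ⊢
    linarith
  rcases (norm_nonneg (w₁ - w₂)).eq_or_lt with h | h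
  · exact h ▸ norm_nonneg _
  · refine le_of_mul_le_mul_right ?_ h
    nlinarith [real_inner_le_norm (z₁ - z₂) (w₁ - w₂)]

theorem norm_sub_smul_sq_le {u d : X} {m M ρ : ℝ} (hρ : 0 ≤ ρ) (hmono : m * ‖u‖ ^ 2 ≤ ⟪d, u⟫)
    (hLip : ‖d‖ ≤ M * ‖u‖) :
    ‖u - ρ • d‖ ^ 2 ≤ (1 - 2 * ρ * m + ρ ^ 2 * M ^ 2) * ‖u‖ ^ 2 := by
  have hLip2 : ‖d‖ ^ 2 ≤ M ^ 2 * ‖u‖ ^ 2 := by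
    simpa only [mul_pow] using pow_le_pow_left₀ (norm_nonneg d) hLip 2
  rw [norm_sub_sq_real, real_inner_smul_right, norm_smul, mul_pow, Real.norm_eq_abs, sq_abs,
    real_inner_comm]
  nlinarith [mul_le_mul_of_nonneg_left hmono hρ, mul_le_mul_of_nonneg_left hLip2 (sq_nonneg ρ)]

theorem exists_forall_inner_add_sub_nonneg [CompleteSpace X] (hK : K.Nonempty)
    (hKcl : IsClosed K) (hKcv : Convex ℝ K) {A : X → X} {M m : ℝ} (hM : 0 < M)
    (hLip : ∀ b₁ ∈ K, ∀ b₂ ∈ K, ‖A b₁ - A b₂‖ ≤ M * ‖b₁ - b₂‖) (hm : 0 < m)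
    (hmono : ∀ b₁ ∈ K, ∀ b₂ ∈ K, m * ‖b₁ - b₂‖ ^ 2 ≤ ⟪A b₁ - A b₂, b₁ - b₂⟫)
    {j : X → ℝ} (hj : ConvexOn ℝ K j) (hjlsc : LowerSemicontinuousOn j K) :
    ∃ b ∈ K, ∀ a ∈ K, 0 ≤ ⟪A b, a - b⟫ + j a - j b := by
  set ρ := m / M ^ 2
  have hρ : 0 < ρ := by positivity
  have hρM : ρ * M ^ 2 = m := div_mul_cancel₀ m (by positivity)
  have hρj : LowerSemicontinuousOn (fun x => ρ * j x) K :=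
    (continuous_const.mul continuous_id).comp_lowerSemicontinuousOn hjlsc
      (monotone_mul_left_of_nonneg hρ.le)
  choose P hP using exists_isProxOn hK hKcl hKcv (hj.smul hρ.le) hρj
  set c := 1 - 2 * ρ * m + ρ ^ 2 * M ^ 2
  have hc : c < 1 := by nlinarith
  have hT : LipschitzOnWith (√c).toNNReal (fun b => P (b - ρ • A b)) K := by
    refine LipschitzOnWith.of_dist_le_mul fun b₁ hb₁ b₂ hb₂ => ?_
    rw [dist_eq_norm, dist_eq_norm, Real.coe_toNNReal _ (Real.sqrt_nonneg c)]
    calc ‖P (b₁ - ρ • A b₁) - P (b₂ - ρ • A b₂)‖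
        ≤ ‖(b₁ - b₂) - ρ • (A b₁ - A b₂)‖ := by
          rw [show (b₁ - b₂) - ρ • (A b₁ - A b₂) = (b₁ - ρ • A b₁) - (b₂ - ρ • A b₂) by module]
          exact (hP _).norm_sub_le (hP _)
      _ ≤ √(c * ‖b₁ - b₂‖ ^ 2) := Real.le_sqrt_of_sq_le <|
          norm_sub_smul_sq_le hρ.le (hmono b₁ hb₁ b₂ hb₂) (hLip b₁ hb₁ b₂ hb₂)
      _ = √c * ‖b₁ - b₂‖ := by rw [Real.sqrt_mul' c (sq_nonneg _), Real.sqrt_sq (norm_nonneg _)]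
  obtain ⟨b, hbK, hb⟩ := hT.exists_fixedPoint hK hKcl (fun b _ => (hP _).1)
    (Real.toNNReal_lt_one.2 ((Real.sqrt_lt' one_pos).2 (by simpa using hc)))
  refine ⟨b, hbK, fun a ha => ?_⟩
  have hba := (hP (b - ρ • A b)).2 a ha
  simp only [hb, sub_sub_cancel, real_inner_smul_left, smul_eq_mul] at hba
  exact (mul_nonneg_iff_of_pos_left hρ).1 (by linarith)

theorem eq_of_forall_inner_add_sub_nonneg {A : X → X} {m : ℝ} (hm : 0 < m)
    (hmono : ∀ b₁ ∈ K, ∀ b₂ ∈ K, m * ‖b₁ - b₂‖ ^ 2 ≤ ⟪A b₁ - A b₂, b₁ - b₂⟫) {j : X → ℝ}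
    {b b' : X} (hb : b ∈ K) (hb' : b' ∈ K) (h : ∀ a ∈ K, 0 ≤ ⟪A b, a - b⟫ + j a - j b)
    (h' : ∀ a ∈ K, 0 ≤ ⟪A b', a - b'⟫ + j a - j b') : b = b' := by
  have hsum : ⟪A b - A b', b - b'⟫ ≤ 0 := by
    have e := h b' hb'
    have e' := h' b hb
    simp only [inner_sub_left, inner_sub_right] at e e' ⊢
    linarith
  have : ‖b - b'‖ ^ 2 ≤ 0 := by nlinarith [hmono b hb b' hb']
  rw [← sub_eq_zero, ← norm_eq_zero]
  exact pow_eq_zero_iff two_ne_zero |>.1 (this.antisymm (sq_nonneg _))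

end Hilbert

/-- Existence and uniqueness of the solution of an elliptic variational inequality
of the second kind: `X` a real Hilbert space, `K ⊆ X` nonempty closed convex,
`A` Lipschitz continuous and strongly monotone on `K`, `j` convex and lower
semicontinuous on `K`. Then there is a unique `b ∈ K` with
`⟨A b, a − b⟩ + j a − j b ≥ ⟨y, a − b⟩` for all `a ∈ K`. -/
theorem stmt1 {X : Type*} [NormedAddCommGroup X] [InnerProductSpace ℝ X] [CompleteSpace X]
    (K : Set X) (hK : K.Nonempty) (hKcl : IsClosed K) (hKcv : Convex ℝ K)
    (y : X) (A : X → X)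
    (M : ℝ) (hM : 0 < M)
    (hLip : ∀ b₁ ∈ K, ∀ b₂ ∈ K, ‖A b₁ - A b₂‖ ≤ M * ‖b₁ - b₂‖)
    (m : ℝ) (hm : 0 < m)
    (hmono : ∀ b₁ ∈ K, ∀ b₂ ∈ K, m * ‖b₁ - b₂‖ ^ 2 ≤ (inner ℝ (A b₁ - A b₂) (b₁ - b₂) : ℝ))
    (j : X → ℝ) (hjcv : ConvexOn ℝ K j) (hjlsc : LowerSemicontinuousOn j K) :
    ∃! b : X, b ∈ K ∧ ∀ a ∈ K,
      (inner ℝ (A b) (a - b) : ℝ) + j a - j b ≥ (inner ℝ y (a - b) : ℝ) := by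
  have hLip' : ∀ b₁ ∈ K, ∀ b₂ ∈ K, ‖(A b₁ - y) - (A b₂ - y)‖ ≤ M * ‖b₁ - b₂‖ := by
    simpa only [sub_sub_sub_cancel_right] using hLip
  have hmono' : ∀ b₁ ∈ K, ∀ b₂ ∈ K, m * ‖b₁ - b₂‖ ^ 2 ≤ ⟪(A b₁ - y) - (A b₂ - y), b₁ - b₂⟫ := by
    simpa only [sub_sub_sub_cancel_right] using hmono
  have hsolves : ∀ b, (∀ a ∈ K, 0 ≤ ⟪A b - y, a - b⟫ + j a - j b) ↔
      ∀ a ∈ K, ⟪A b, a - b⟫ + j a - j b ≥ ⟪y, a - b⟫ := fun b =>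
    forall₂_congr fun a _ => by rw [inner_sub_left, ge_iff_le]; constructor <;> intro h <;> linarith
  obtain ⟨b, hbK, hb⟩ :=
    exists_forall_inner_add_sub_nonneg hK hKcl hKcv hM hLip' hm hmono' hjcv hjlsc
  refine ⟨b, ⟨hbK, (hsolves b).1 hb⟩, fun b' ⟨hb'K, hb'⟩ => ?_⟩
  exact (eq_of_forall_inner_add_sub_nonneg hm hmono' hbK hb'K hb ((hsolves b').2 hb')).symm
end

section
/- Let X be a real Banach space, T > 0, and let Λ : C([0,T]; X) → C([0,T]; X) be an operator for which there exist constants l ∈ [0, 1) and L ≥ 0 such that for all a, b ∈ C([0,T]; X) and all t ∈ [0,T], ‖Λa(t) − Λb(t)‖_X ≤ l‖a(t) − b(t)‖_X + L ∫₀ᵗ ‖a(s) − b(s)‖_X ds. Then Λ has a unique fixed point in C([0,T]; X). -/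
open scoped ContinuousMap
open Set Real Function

/-!
Bielecki's trick: conjugating `Λ` by the weight `a ↦ (t ↦ e^{μt} a(t))` amounts to measuring
distances in the norm `sup_t e^{-μt} ‖a(t)‖`, in which the memory term is small: it contributes
at most `e^{-μt} L ∫₀ᵗ e^{μs} ds ≤ L/μ`. Hence the conjugated operator is Lipschitz with constant
`l + L/μ`, which is `< 1` once `μ` is large. Banach's fixed point theorem then applies
in the (complete) space `C([0,T]; X)`.
-/

theorem ContractingWith.existsUnique_isFixedPt {α : Type*} [MetricSpace α] [CompleteSpace α]
    [Nonempty α] {K : NNReal} {f : α → α} (hf : ContractingWith K f) : ∃! x, IsFixedPt f x :=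
  ⟨_, hf.fixedPoint_isFixedPt, fun _ hx => hf.fixedPoint_unique hx⟩

lemma integral_exp_mul_from_zero {μ : ℝ} (hμ : μ ≠ 0) (t : ℝ) :
    ∫ s in (0 : ℝ)..t, exp (μ * s) = (exp (μ * t) - 1) / μ := by
  rw [intervalIntegral.integral_comp_mul_left (fun x => exp x) hμ, integral_exp, mul_zero,
    exp_zero, smul_eq_mul, inv_mul_eq_div]

section BieleckiWeight

variable {X : Type*} [NormedAddCommGroup X] [NormedSpace ℝ X] {s : Set ℝ} {T : ℝ}

noncomputable def expWeight (μ : ℝ) : C(s, X) ≃ C(s, X) where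
  toFun a := ⟨fun t => exp (μ * t) • a t, by fun_prop⟩
  invFun a := ⟨fun t => exp (-(μ * t)) • a t, by fun_prop⟩
  left_inv a := by ext t; simp [smul_smul, ← exp_add]
  right_inv a := by ext t; simp [smul_smul, ← exp_add]

@[simp]
lemma expWeight_apply (μ : ℝ) (a : C(s, X)) (t : s) : expWeight μ a t = exp (μ * t) • a t :=
  rfl

@[simp]
lemma expWeight_symm_apply (μ : ℝ) (a : C(s, X)) (t : s) :
    (expWeight μ).symm a t = exp (-(μ * t)) • a t :=
  rfl

lemma dist_expWeight_symm_apply (μ : ℝ) (a b : C(s, X)) (t : s) :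
    dist ((expWeight μ).symm a t) ((expWeight μ).symm b t) = exp (-(μ * t)) * ‖a t - b t‖ := by
  rw [dist_eq_norm, expWeight_symm_apply, expWeight_symm_apply, ← smul_sub, norm_smul,
    norm_of_nonneg (exp_pos _).le]

lemma norm_expWeight_apply_sub_le [CompactSpace s] (μ : ℝ) (a b : C(s, X)) (t : s) :
    ‖expWeight μ a t - expWeight μ b t‖ ≤ exp (μ * t) * dist a b := by
  rw [expWeight_apply, expWeight_apply, ← smul_sub, norm_smul, norm_of_nonneg (exp_pos _).le,
    ← dist_eq_norm]
  gcongr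
  exact a.dist_apply_le_dist t

/-- Composing with `projIcc` extends `a` to `ℝ`, so the interval integral over `[0, t]` is
that of `‖a(s) - b(s)‖`. -/
def AlmostHistoryDependent (hT : 0 ≤ T) (Λ : C(Icc 0 T, X) → C(Icc 0 T, X)) (l L : ℝ) : Prop :=
  ∀ a b : C(Icc 0 T, X), ∀ t : Icc 0 T,
    ‖Λ a t - Λ b t‖ ≤ l * ‖a t - b t‖ +
      L * ∫ s in (0 : ℝ)..(t : ℝ), ‖a (projIcc 0 T hT s) - b (projIcc 0 T hT s)‖

lemma integral_norm_expWeight_sub_le (hT : 0 ≤ T) {μ : ℝ} (hμ : 0 < μ) (u v : C(Icc 0 T, X))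
    (t : Icc 0 T) :
    ∫ s in (0 : ℝ)..(t : ℝ),
        ‖expWeight μ u (projIcc 0 T hT s) - expWeight μ v (projIcc 0 T hT s)‖ ≤
      (exp (μ * t) - 1) / μ * dist u v := by
  calc _ ≤ ∫ s in (0 : ℝ)..(t : ℝ), exp (μ * s) * dist u v := by
        refine intervalIntegral.integral_mono_on t.2.1 (Continuous.intervalIntegrable
          (by fun_prop) _ _) (Continuous.intervalIntegrable (by fun_prop) _ _) fun s hs => ?_
        have hproj : ((projIcc 0 T hT s : Icc 0 T) : ℝ) = s := by
          rw [projIcc_of_mem hT ⟨hs.1, hs.2.trans t.2.2⟩]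
        simpa only [hproj] using norm_expWeight_apply_sub_le μ u v (projIcc 0 T hT s)
    _ = (exp (μ * t) - 1) / μ * dist u v := by
        rw [intervalIntegral.integral_mul_const, integral_exp_mul_from_zero hμ.ne']

theorem AlmostHistoryDependent.contractingWith_expWeight_conj {hT : 0 ≤ T}
    {Λ : C(Icc 0 T, X) → C(Icc 0 T, X)} {l L : ℝ} (hΛ : AlmostHistoryDependent hT Λ l L)
    (hl : 0 ≤ l) (hL : 0 ≤ L) {μ : ℝ} (hμ : 0 < μ) (hK : l + L / μ < 1) :
    ContractingWith ⟨l + L / μ, by positivity⟩ ((expWeight μ).symm ∘ Λ ∘ expWeight μ) := by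
  refine ⟨hK, LipschitzWith.of_dist_le_mul fun u v => ?_⟩
  change _ ≤ (l + L / μ) * _
  rw [ContinuousMap.dist_le (by positivity)]
  intro t
  calc dist (((expWeight μ).symm ∘ Λ ∘ expWeight μ) u t)
        (((expWeight μ).symm ∘ Λ ∘ expWeight μ) v t)
      = (exp (μ * t))⁻¹ * ‖Λ (expWeight μ u) t - Λ (expWeight μ v) t‖ := by
        rw [← exp_neg]
        exact dist_expWeight_symm_apply μ _ _ t
    _ ≤ (exp (μ * t))⁻¹ * (l * (exp (μ * t) * dist u v) +
          L * ((exp (μ * t) - 1) / μ * dist u v)) := by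
        gcongr
        refine (hΛ _ _ t).trans ?_
        gcongr
        · exact norm_expWeight_apply_sub_le μ u v t
        · exact integral_norm_expWeight_sub_le hT hμ u v t
    _ = (l + L / μ) * dist u v - L / μ * (exp (μ * t))⁻¹ * dist u v := by
        field_simp
        ring
    _ ≤ (l + L / μ) * dist u v := by
        have : 0 ≤ L / μ * (exp (μ * t))⁻¹ * dist u v := by positivity
        linarith

end BieleckiWeight

/-- Fixed point theorem for almost history-dependent operators: if
`Λ : C([0,T]; X) → C([0,T]; X)` satisfies, for some `l ∈ [0,1)` and `L ≥ 0`,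
`‖Λa(t) − Λb(t)‖ ≤ l‖a(t) − b(t)‖ + L ∫₀ᵗ ‖a(s) − b(s)‖ ds` for all `a, b` and
`t ∈ [0,T]`, then `Λ` has a unique fixed point. -/
theorem stmt2 {X : Type*} [NormedAddCommGroup X] [NormedSpace ℝ X] [CompleteSpace X]
    (T : ℝ) (hT : 0 < T)
    (Λ : C(Set.Icc (0:ℝ) T, X) → C(Set.Icc (0:ℝ) T, X))
    (l L : ℝ) (hl0 : 0 ≤ l) (hl1 : l < 1) (hL : 0 ≤ L)
    (h : ∀ a b : C(Set.Icc (0:ℝ) T, X), ∀ t : Set.Icc (0:ℝ) T,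
      ‖Λ a t - Λ b t‖ ≤ l * ‖a t - b t‖ +
        L * ∫ s in (0:ℝ)..(t:ℝ),
          ‖a (Set.projIcc 0 T hT.le s) - b (Set.projIcc 0 T hT.le s)‖) :
    ∃! a : C(Set.Icc (0:ℝ) T, X), Λ a = a := by
  obtain ⟨μ, hμ, hK⟩ : ∃ μ > 0, l + L / μ < 1 := by
    refine ⟨(L + 1) / (1 - l), by have := sub_pos.2 hl1; positivity, ?_⟩
    rw [div_div_eq_mul_div, ← lt_sub_iff_add_lt', div_lt_iff₀ (by linarith)]
    nlinarith
  have hΦ := AlmostHistoryDependent.contractingWith_expWeight_conj h hl0 hL hμ hK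
  refine ((expWeight μ).existsUnique_congr fun a => ?_).mp hΦ.existsUnique_isFixedPt
  exact (expWeight μ).symm_apply_eq
end

section
/- Let T > 0, I = [0,T], V a separable real Hilbert space, X and Z real Banach spaces, Y₁ a real Hilbert space, K_V ⊆ V nonempty closed convex, K_Y ⊆ Y₁ nonempty convex. Assume hypotheses H(A), H(j), H(R), H(S) hold, that f : I → V is continuous, and that m > β. Then for any given continuous function w : I → ℝ and any continuous ξ : I → Y₁ with ξ(t) ∈ K_Y for all t ∈ I, there exists a unique η ∈ C(I; V) with η(t) ∈ K_V for all t ∈ I such that for every t ∈ I and every v ∈ K_V: ⟨A(R(η, ξ)(t), η(t)), v − η(t)⟩_V + j(Sη(t), η(t), w(t), v) − j(Sη(t), η(t), w(t), η(t)) ≥ ⟨f(t), v − η(t)⟩_V. -/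
/-!
At each time the problem is an elliptic quasivariational inequality, solved by Banach's fixed point
theorem twice. For a fixed convex functional `φ` the solution is the fixed point of
`g ↦ prox_{ρφ} (g - ρ (A g - f))`; the proximal point exists because `φ + ‖· - g‖² / 2` is strongly
convex, lower semicontinuous and bounded below, hence has a minimizer on `K`. The dependence of `j`
on the solution is then a contraction with constant `β / m`.

Testing two solutions against each other shows that the solution depends Lipschitz continuously on
the data `(R η ξ t, S η t, w t, f t)` with constant `1 / (m - β)`. Hence `Λ η = (t ↦ solution at t)`
is history dependent, `‖Λ η₁ t - Λ η₂ t‖ ≤ C ∫₀ᵗ ‖η₁ - η₂‖`, its `n`-th iterate is Lipschitz with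
constant `(C T)ⁿ / n!`, and its unique fixed point is the unique solution.
-/

open Set Filter Topology

open scoped ContinuousMap

lemma mul_le_of_mul_sq_le {a b x : ℝ} (hx : 0 ≤ x) (hb : 0 ≤ b) (h : a * x ^ 2 ≤ b * x) :
    a * x ≤ b := by
  rcases hx.eq_or_lt with rfl | hx
  · simpa using hb
  · nlinarith

lemma nonneg_of_forall_nonneg_add_mul {a b : ℝ} (h : ∀ t ∈ Ioo (0 : ℝ) 1, 0 ≤ a + t * b) :
    0 ≤ a := by
  have hlim : Tendsto (fun t : ℝ => a + t * b) (𝓝[>] 0) (𝓝 a) := by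
    refine tendsto_nhdsWithin_of_tendsto_nhds ?_
    exact (show Continuous fun t : ℝ => a + t * b by fun_prop).tendsto' 0 a (by simp)
  exact ge_of_tendsto hlim (eventually_of_mem (Ioo_mem_nhdsGT one_pos) h)

section Minorant

variable {E : Type*} [SeminormedAddCommGroup E] [NormedSpace ℝ E] {K : Set E} {φ : E → ℝ}

/-- Lower semicontinuity at one point bounds `φ` from below near it, and convexity propagates
this bound along every segment issuing from that point. -/
lemma ConvexOn.exists_sub_mul_norm_le {x₀ : E} (hφ : ConvexOn ℝ K φ) (hx₀ : x₀ ∈ K)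
    (hφx₀ : LowerSemicontinuousWithinAt φ K x₀) :
    ∃ c M : ℝ, 0 ≤ M ∧ ∀ v ∈ K, c - M * ‖v - x₀‖ ≤ φ v := by
  obtain ⟨δ, hδ, hnear⟩ : ∃ δ > 0, ∀ y, dist y x₀ < δ → y ∈ K → φ x₀ - 1 < φ y :=
    Metric.eventually_nhds_iff.1 (eventually_nhdsWithin_iff.1 (hφx₀ _ (sub_one_lt _)))
  refine ⟨φ x₀ - 1, δ⁻¹, by positivity, fun v hv => ?_⟩
  set r := ‖v - x₀‖
  set t := δ / (r + δ)
  have ht₀ : 0 < t := by positivity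
  have ht₁ : t ≤ 1 := div_le_one_of_le₀ (by linarith [norm_nonneg (v - x₀)]) (by positivity)
  have hseg : (1 - t) • x₀ + t • v ∈ K := hφ.1 hx₀ hv (sub_nonneg.2 ht₁) ht₀.le (sub_add_cancel 1 t)
  have hconv := hφ.2 hx₀ hv (sub_nonneg.2 ht₁) ht₀.le (sub_add_cancel 1 t)
  have hclose : dist ((1 - t) • x₀ + t • v) x₀ < δ := by
    rw [dist_eq_norm, show (1 - t) • x₀ + t • v - x₀ = t • (v - x₀) by module, norm_smul,
      Real.norm_of_nonneg ht₀.le, div_mul_eq_mul_div, div_lt_iff₀ (by positivity)]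
    nlinarith
  have hlow := hnear _ hclose hseg
  simp only [smul_eq_mul] at hconv
  have htr : t * (r + δ) = δ := div_mul_cancel₀ _ (by positivity)
  rw [sub_le_iff_le_add, ← sub_le_iff_le_add', inv_mul_eq_div, le_div_iff₀ hδ]
  nlinarith

end Minorant

section Minimizer

variable {E : Type*} [NormedAddCommGroup E] [NormedSpace ℝ E] [CompleteSpace E]
  {K : Set E} {F : E → ℝ} {μ : ℝ}

/-- Strong convexity makes every minimizing sequence Cauchy. -/
lemma StrongConvexOn.exists_isMinOn (hKne : K.Nonempty) (hKcl : IsClosed K) (hμ : 0 < μ)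
    (hF : StrongConvexOn K μ F) (hFl : LowerSemicontinuousOn F K) (hbdd : BddBelow (F '' K)) :
    ∃ u ∈ K, IsMinOn F K u := by
  set d := sInf (F '' K)
  have hd : ∀ v ∈ K, d ≤ F v := fun v hv => csInf_le hbdd (mem_image_of_mem F hv)
  have hmid : ∀ x ∈ K, ∀ y ∈ K, μ / 8 * ‖x - y‖ ^ 2 ≤ F x / 2 + F y / 2 - d := by
    intro x hx y hy
    have hhalf : (0 : ℝ) ≤ 1 / 2 := by norm_num
    have hconv := hF.2 hx hy hhalf hhalf (by norm_num)
    have hmid_ge := hd _ (hF.1 hx hy hhalf hhalf (by norm_num))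
    simp only [smul_eq_mul] at hconv
    linarith
  have hseq : ∀ n : ℕ, ∃ v ∈ K, F v < d + 1 / (n + 1) := fun n => by
    obtain ⟨_, ⟨v, hv, rfl⟩, hlt⟩ :=
      Real.lt_sInf_add_pos (hKne.image F) (Nat.one_div_pos_of_nat (α := ℝ) (n := n))
    exact ⟨v, hv, hlt⟩
  choose x hxK hxF using hseq
  have hcauchy : CauchySeq x := by
    refine cauchySeq_of_le_tendsto_0 (fun N : ℕ => √(8 / μ * (1 / (N + 1)))) ?_ ?_
    · intro n k N hn hk
      have hn' : 1 / ((n : ℝ) + 1) ≤ 1 / ((N : ℝ) + 1) := Nat.one_div_le_one_div hn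
      have hk' : 1 / ((k : ℝ) + 1) ≤ 1 / ((N : ℝ) + 1) := Nat.one_div_le_one_div hk
      have h := hmid _ (hxK n) _ (hxK k)
      have hsq : ‖x n - x k‖ ^ 2 ≤ 8 / μ * (1 / (N + 1)) := by
        rw [div_mul_eq_mul_div, le_div_iff₀ hμ]
        linarith [hxF n, hxF k]
      rw [dist_eq_norm]
      exact Real.le_sqrt_of_sq_le hsq
    · simpa using (tendsto_one_div_add_atTop_nhds_zero_nat.const_mul (8 / μ)).sqrt
  obtain ⟨u, hu⟩ := cauchySeq_tendsto_of_complete hcauchy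
  have huK : u ∈ K := hKcl.mem_of_tendsto hu (Eventually.of_forall hxK)
  refine ⟨u, huK, fun v hv => le_trans ?_ (hd v hv)⟩
  by_contra! hlt
  have habove : ∀ᶠ n in atTop, (d + F u) / 2 < F (x n) :=
    (tendsto_nhdsWithin_iff.2 ⟨hu, .of_forall hxK⟩).eventually (hFl u huK _ (by linarith))
  have hbelow : ∀ᶠ n : ℕ in atTop, d + 1 / (n + 1) < (d + F u) / 2 := by
    refine (tendsto_one_div_add_atTop_nhds_zero_nat.const_add d).eventually (gt_mem_nhds ?_)
    linarith
  obtain ⟨n, h₁, h₂⟩ := (habove.and hbelow).exists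
  linarith [hxF n]

end Minimizer

section VariationalInequality

open scoped RealInnerProductSpace

variable {V : Type*} [NormedAddCommGroup V] [InnerProductSpace ℝ V]

/-- With `A = id`, a solution is the proximal point of `φ` at `f`. -/
def IsVISolution (K : Set V) (A : V → V) (φ : V → ℝ) (f u : V) : Prop :=
  u ∈ K ∧ ∀ v ∈ K, ⟪f, v - u⟫ ≤ ⟪A u, v - u⟫ + φ v - φ u

lemma IsVISolution.inner_sub_le {K : Set V} {A₁ A₂ : V → V} {φ₁ φ₂ : V → ℝ} {f₁ f₂ u₁ u₂ : V}
    (h₁ : IsVISolution K A₁ φ₁ f₁ u₁) (h₂ : IsVISolution K A₂ φ₂ f₂ u₂) :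
    ⟪A₁ u₁ - A₂ u₂, u₁ - u₂⟫ ≤ ⟪f₁ - f₂, u₁ - u₂⟫ + (φ₁ u₂ - φ₁ u₁ + φ₂ u₁ - φ₂ u₂) := by
  have e₁ := h₁.2 u₂ h₂.1
  have e₂ := h₂.2 u₁ h₁.1
  rw [← neg_sub u₁ u₂, inner_neg_right, inner_neg_right] at e₁
  simp only [inner_sub_left]
  linarith

lemma strongConvexOn_add_norm_sub_sq {K : Set V} {φ : V → ℝ} (hφ : ConvexOn ℝ K φ) (g : V) :
    StrongConvexOn K 1 fun v => φ v + ‖v - g‖ ^ 2 / 2 := by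
  have hrw : (fun v => φ v + ‖v - g‖ ^ 2 / 2 - 1 / 2 * ‖v‖ ^ 2) =
      (φ + ⇑(-innerₛₗ ℝ g)) + fun _ => ‖g‖ ^ 2 / 2 := by
    ext v
    simp only [norm_sub_sq_real, Pi.add_apply, LinearMap.neg_apply, innerₛₗ_apply_apply,
      real_inner_comm g v]
    ring
  rw [strongConvexOn_iff_convex, hrw]
  exact (hφ.add ((-innerₛₗ ℝ g).convexOn hφ.1)).add_const _

lemma IsMinOn.isVISolution_id {K : Set V} {φ : V → ℝ} {g u : V} (hφ : ConvexOn ℝ K φ)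
    (hu : u ∈ K) (hmin : IsMinOn (fun v => φ v + ‖v - g‖ ^ 2 / 2) K u) :
    IsVISolution K id φ g u := by
  refine ⟨hu, fun v hv => ?_⟩
  suffices h : 0 ≤ ⟪u - g, v - u⟫ + φ v - φ u by
    rw [inner_sub_left] at h
    simp only [id]
    linarith
  refine nonneg_of_forall_nonneg_add_mul (b := ‖v - u‖ ^ 2 / 2) fun t ht => ?_
  have hseg := hφ.1 hu hv (sub_nonneg.2 ht.2.le) ht.1.le (sub_add_cancel 1 t)
  have hconv := hφ.2 hu hv (sub_nonneg.2 ht.2.le) ht.1.le (sub_add_cancel 1 t)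
  have hle : φ u + ‖u - g‖ ^ 2 / 2 ≤ φ ((1 - t) • u + t • v) + ‖(1 - t) • u + t • v - g‖ ^ 2 / 2 :=
    hmin hseg
  rw [show (1 - t) • u + t • v - g = (u - g) + t • (v - u) by module, norm_add_sq_real,
    inner_smul_right, norm_smul, Real.norm_of_nonneg ht.1.le, mul_pow] at hle
  simp only [smul_eq_mul] at hconv
  nlinarith [ht.1]

lemma IsVISolution.norm_sub_le_of_id {K : Set V} {φ : V → ℝ} {g₁ g₂ u₁ u₂ : V}
    (h₁ : IsVISolution K id φ g₁ u₁) (h₂ : IsVISolution K id φ g₂ u₂) :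
    ‖u₁ - u₂‖ ≤ ‖g₁ - g₂‖ := by
  have h := h₁.inner_sub_le h₂
  simp only [id, real_inner_self_eq_norm_sq, sub_add_cancel, sub_self, add_zero] at h
  have hcs := (real_inner_le_norm (g₁ - g₂) (u₁ - u₂)).trans_eq (mul_comm _ _)
  simpa using mul_le_of_mul_sq_le (a := 1) (norm_nonneg _) (norm_nonneg _) (by linarith)

lemma norm_sub_div_sq_smul_le {p q : V} {m L : ℝ} (hm : 0 ≤ m) (hL : 0 < L)
    (hmono : m * ‖p‖ ^ 2 ≤ ⟪q, p⟫) (hlip : ‖q‖ ≤ L * ‖p‖) :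
    ‖p - (m / L ^ 2) • q‖ ≤ √(1 - m ^ 2 / L ^ 2) * ‖p‖ := by
  rw [← Real.sqrt_sq (norm_nonneg _), ← Real.sqrt_sq (norm_nonneg p),
    ← Real.sqrt_mul' _ (sq_nonneg _)]
  refine Real.sqrt_le_sqrt ?_
  have hρ : 0 ≤ m / L ^ 2 := by positivity
  have hq : ‖q‖ ^ 2 ≤ L ^ 2 * ‖p‖ ^ 2 := by
    rw [← mul_pow]; exact pow_le_pow_left₀ (norm_nonneg q) hlip 2
  have hρL : (m / L ^ 2) ^ 2 * L ^ 2 * ‖p‖ ^ 2 = m ^ 2 / L ^ 2 * ‖p‖ ^ 2 := by field_simp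
  rw [norm_sub_sq_real, real_inner_smul_right, norm_smul, Real.norm_of_nonneg hρ, mul_pow,
    real_inner_comm]
  linear_combination 2 * mul_le_mul_of_nonneg_left hmono hρ +
    mul_le_mul_of_nonneg_left hq (sq_nonneg (m / L ^ 2)) + hρL

lemma IsVISolution.mul_norm_sub_le {K : Set V} {A : V → V} {m β : ℝ} {ψ : V → V → ℝ}
    {f b₁ b₂ u₁ u₂ : V}
    (hmono : ∀ b₁ ∈ K, ∀ b₂ ∈ K, m * ‖b₁ - b₂‖ ^ 2 ≤ ⟪A b₁ - A b₂, b₁ - b₂⟫) (hβ : 0 ≤ β)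
    (hψ : ∀ b₁ b₂, ∀ d₁ ∈ K, ∀ d₂ ∈ K,
      ψ b₁ d₂ - ψ b₁ d₁ + ψ b₂ d₁ - ψ b₂ d₂ ≤ β * ‖b₁ - b₂‖ * ‖d₁ - d₂‖)
    (h₁ : IsVISolution K A (ψ b₁) f u₁) (h₂ : IsVISolution K A (ψ b₂) f u₂) :
    m * ‖u₁ - u₂‖ ≤ β * ‖b₁ - b₂‖ := by
  have h := h₁.inner_sub_le h₂
  rw [sub_self, inner_zero_left, zero_add] at h
  exact mul_le_of_mul_sq_le (norm_nonneg _) (by positivity)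
    (((hmono _ h₁.1 _ h₂.1).trans h).trans (hψ _ _ _ h₁.1 _ h₂.1))

section Existence

variable [CompleteSpace V] {K : Set V}

lemma exists_isVISolution_id (hKne : K.Nonempty) (hKcl : IsClosed K) {φ : V → ℝ}
    (hφc : ConvexOn ℝ K φ) (hφl : LowerSemicontinuousOn φ K) (g : V) :
    ∃ u, IsVISolution K id φ g u := by
  obtain ⟨x₀, hx₀⟩ := hKne
  obtain ⟨c, M, hM, hcM⟩ := hφc.exists_sub_mul_norm_le hx₀ (hφl x₀ hx₀)
  have hbdd : BddBelow ((fun v => φ v + ‖v - g‖ ^ 2 / 2) '' K) := by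
    refine ⟨c - M * ‖g - x₀‖ - M ^ 2 / 2, ?_⟩
    rintro _ ⟨v, hv, rfl⟩
    have htri := mul_le_mul_of_nonneg_left (norm_sub_le_norm_sub_add_norm_sub v g x₀) hM
    nlinarith [hcM v hv, sq_nonneg (‖v - g‖ - M)]
  have hFl : LowerSemicontinuousOn (fun v => φ v + ‖v - g‖ ^ 2 / 2) K :=
    hφl.add ((by fun_prop : Continuous fun v : V => ‖v - g‖ ^ 2 / 2).lowerSemicontinuous
      |>.lowerSemicontinuousOn K)
  obtain ⟨u, hu, hmin⟩ := (strongConvexOn_add_norm_sub_sq hφc g).exists_isMinOn ⟨x₀, hx₀⟩ hKcl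
    one_pos hFl hbdd
  exact ⟨u, hmin.isVISolution_id hφc hu⟩

/-- The solution is the fixed point of `g ↦ prox_{ρφ} (g - ρ (A g - f))` with `ρ = m / L²`, a
contraction with constant `√(1 - m² / L²)`. -/
lemma exists_isVISolution (hKne : K.Nonempty) (hKcl : IsClosed K) {A : V → V} {L m : ℝ}
    (hL : 0 < L) (hm : 0 < m) (hlip : ∀ b₁ ∈ K, ∀ b₂ ∈ K, ‖A b₁ - A b₂‖ ≤ L * ‖b₁ - b₂‖)
    (hmono : ∀ b₁ ∈ K, ∀ b₂ ∈ K, m * ‖b₁ - b₂‖ ^ 2 ≤ ⟪A b₁ - A b₂, b₁ - b₂⟫)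
    {φ : V → ℝ} (hφc : ConvexOn ℝ K φ) (hφl : LowerSemicontinuousOn φ K) (f : V) :
    ∃ u, IsVISolution K A φ f u := by
  set ρ := m / L ^ 2
  have hρ : 0 < ρ := by positivity
  have hρφl : LowerSemicontinuousOn (fun v => ρ * φ v) K :=
    (continuous_const_mul ρ).comp_lowerSemicontinuousOn hφl (monotone_mul_left_of_nonneg hρ.le)
  choose P hP using fun g =>
    exists_isVISolution_id hKne hKcl (hφc.smul hρ.le) hρφl (g - ρ • (A g - f))
  have hmaps : MapsTo P K K := fun g _ => (hP g).1
  have hcon : ContractingWith (√(1 - m ^ 2 / L ^ 2)).toNNReal (hmaps.restrict P K K) := by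
    refine ⟨Real.toNNReal_lt_one.2 ((Real.sqrt_lt' one_pos).2 ?_),
      LipschitzWith.of_dist_le_mul fun g₁ g₂ => ?_⟩
    · have : 0 < m ^ 2 / L ^ 2 := by positivity
      linarith
    rw [Subtype.dist_eq, Subtype.dist_eq, dist_eq_norm, dist_eq_norm,
      Real.coe_toNNReal _ (Real.sqrt_nonneg _)]
    refine ((hP g₁).norm_sub_le_of_id (hP g₂)).trans ?_
    rw [show g₁ - ρ • (A g₁ - f) - (g₂ - ρ • (A g₂ - f)) = g₁ - g₂ - ρ • (A g₁ - A g₂) by module]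
    exact norm_sub_div_sq_smul_le hm.le hL (hmono _ g₁.2 _ g₂.2) (hlip _ g₁.2 _ g₂.2)
  obtain ⟨x₀, hx₀⟩ := hKne
  obtain ⟨u, -, hu, -⟩ := hcon.exists_fixedPoint' hKcl.isComplete hmaps hx₀ (edist_ne_top _ _)
  have h := hP u
  rw [hu.eq] at h
  refine ⟨u, h.1, fun v hv => le_of_mul_le_mul_left ?_ hρ⟩
  have hv' := h.2 v hv
  simp only [id, inner_sub_left, real_inner_smul_left, smul_eq_mul] at hv'
  linarith

/-- The map sending `b` to the solution of the inequality with the functional `ψ b` is a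
contraction with constant `β / m`. -/
lemma existsUnique_isVISolution_quasi (hKne : K.Nonempty) (hKcl : IsClosed K) {A : V → V}
    {L m : ℝ} (hL : 0 < L) (hm : 0 < m)
    (hlip : ∀ b₁ ∈ K, ∀ b₂ ∈ K, ‖A b₁ - A b₂‖ ≤ L * ‖b₁ - b₂‖)
    (hmono : ∀ b₁ ∈ K, ∀ b₂ ∈ K, m * ‖b₁ - b₂‖ ^ 2 ≤ ⟪A b₁ - A b₂, b₁ - b₂⟫)
    {ψ : V → V → ℝ} (hψc : ∀ b, ConvexOn ℝ K (ψ b)) (hψl : ∀ b, LowerSemicontinuousOn (ψ b) K)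
    {β : ℝ} (hβ : 0 ≤ β) (hβm : β < m)
    (hψ : ∀ b₁ b₂, ∀ d₁ ∈ K, ∀ d₂ ∈ K,
      ψ b₁ d₂ - ψ b₁ d₁ + ψ b₂ d₁ - ψ b₂ d₂ ≤ β * ‖b₁ - b₂‖ * ‖d₁ - d₂‖) (f : V) :
    ∃! u, IsVISolution K A (ψ u) f u := by
  choose Q hQ using fun b => exists_isVISolution hKne hKcl hL hm hlip hmono (hψc b) (hψl b) f
  have hcon : ContractingWith (β / m).toNNReal Q := by
    refine ⟨Real.toNNReal_lt_one.2 ((div_lt_one hm).2 hβm),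
      LipschitzWith.of_dist_le_mul fun b₁ b₂ => ?_⟩
    rw [dist_eq_norm, dist_eq_norm, Real.coe_toNNReal _ (by positivity), div_mul_eq_mul_div,
      le_div_iff₀ hm, mul_comm]
    exact (hQ b₁).mul_norm_sub_le hmono hβ hψ (hQ b₂)
  obtain ⟨u, hu, -⟩ := hcon.exists_fixedPoint 0 (edist_ne_top _ _)
  have h := hQ u
  rw [hu.eq] at h
  refine ⟨u, h, fun u' h' => ?_⟩
  have hle := h'.mul_norm_sub_le hmono hβ hψ h
  rw [← sub_eq_zero, ← norm_le_zero_iff]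
  nlinarith [norm_nonneg (u' - u)]

end Existence

section DataDependence

variable {X Z : Type*} [SeminormedAddCommGroup X] [SeminormedAddCommGroup Z] {K : Set V}
  {A : X → V → V} {j : Z → V → ℝ → V → ℝ} {L₁ m α β γ : ℝ}

lemma IsVISolution.sub_mul_norm_sub_le (hL₁ : 0 ≤ L₁) (hα : 0 ≤ α) (hγ : 0 ≤ γ)
    (hA₁ : ∀ (a₁ a₂ : X), ∀ b ∈ K, ‖A a₁ b - A a₂ b‖ ≤ L₁ * ‖a₁ - a₂‖)
    (hA₃ : ∀ (a : X), ∀ b₁ ∈ K, ∀ b₂ ∈ K, m * ‖b₁ - b₂‖ ^ 2 ≤ ⟪A a b₁ - A a b₂, b₁ - b₂⟫)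
    (hj : ∀ (a₁ a₂ : Z) (b₁ b₂ : V) (c₁ c₂ : ℝ), ∀ d₁ ∈ K, ∀ d₂ ∈ K,
      j a₁ b₁ c₁ d₂ - j a₁ b₁ c₁ d₁ + j a₂ b₂ c₂ d₁ - j a₂ b₂ c₂ d₂ ≤
        α * ‖a₁ - a₂‖ * ‖d₁ - d₂‖ + β * ‖b₁ - b₂‖ * ‖d₁ - d₂‖ + γ * |c₁ - c₂| * ‖d₁ - d₂‖)
    {x₁ x₂ : X} {z₁ z₂ : Z} {c₁ c₂ : ℝ} {g₁ g₂ u₁ u₂ : V}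
    (h₁ : IsVISolution K (A x₁) (j z₁ u₁ c₁) g₁ u₁)
    (h₂ : IsVISolution K (A x₂) (j z₂ u₂ c₂) g₂ u₂) :
    (m - β) * ‖u₁ - u₂‖ ≤ L₁ * ‖x₁ - x₂‖ + α * ‖z₁ - z₂‖ + γ * |c₁ - c₂| + ‖g₁ - g₂‖ := by
  have h := h₁.inner_sub_le h₂
  have hsplit : A x₁ u₁ - A x₂ u₂ = (A x₁ u₁ - A x₁ u₂) + (A x₁ u₂ - A x₂ u₂) := by abel
  rw [hsplit, inner_add_left] at h
  have hx : -(L₁ * ‖x₁ - x₂‖ * ‖u₁ - u₂‖) ≤ ⟪A x₁ u₂ - A x₂ u₂, u₁ - u₂⟫ :=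
    neg_le_of_abs_le ((abs_real_inner_le_norm _ _).trans
      (mul_le_mul_of_nonneg_right (hA₁ x₁ x₂ u₂ h₂.1) (norm_nonneg _)))
  have hg := real_inner_le_norm (g₁ - g₂) (u₁ - u₂)
  refine mul_le_of_mul_sq_le (norm_nonneg _) (by positivity) ?_
  nlinarith [hA₃ x₁ u₁ h₁.1 u₂ h₂.1, hj z₁ z₂ u₁ u₂ c₁ c₂ u₁ h₁.1 u₂ h₂.1]

lemma continuous_of_forall_isVISolution {Y : Type*} [TopologicalSpace Y] (hL₁ : 0 ≤ L₁)
    (hα : 0 ≤ α) (hγ : 0 ≤ γ)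
    (hA₁ : ∀ (a₁ a₂ : X), ∀ b ∈ K, ‖A a₁ b - A a₂ b‖ ≤ L₁ * ‖a₁ - a₂‖)
    (hA₃ : ∀ (a : X), ∀ b₁ ∈ K, ∀ b₂ ∈ K, m * ‖b₁ - b₂‖ ^ 2 ≤ ⟪A a b₁ - A a b₂, b₁ - b₂⟫)
    (hj : ∀ (a₁ a₂ : Z) (b₁ b₂ : V) (c₁ c₂ : ℝ), ∀ d₁ ∈ K, ∀ d₂ ∈ K,
      j a₁ b₁ c₁ d₂ - j a₁ b₁ c₁ d₁ + j a₂ b₂ c₂ d₁ - j a₂ b₂ c₂ d₂ ≤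
        α * ‖a₁ - a₂‖ * ‖d₁ - d₂‖ + β * ‖b₁ - b₂‖ * ‖d₁ - d₂‖ + γ * |c₁ - c₂| * ‖d₁ - d₂‖)
    (hβm : β < m) {x : Y → X} {z : Y → Z} {c : Y → ℝ} {g u : Y → V} (hx : Continuous x)
    (hz : Continuous z) (hc : Continuous c) (hg : Continuous g)
    (hu : ∀ t, IsVISolution K (A (x t)) (j (z t) (u t) (c t)) (g t) (u t)) :
    Continuous u := by
  refine continuous_iff_continuousAt.2 fun t₀ => tendsto_iff_norm_sub_tendsto_zero.2 ?_
  refine squeeze_zero (fun _ => norm_nonneg _) (fun t => (le_div_iff₀' (sub_pos.2 hβm)).2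
    ((hu t).sub_mul_norm_sub_le hL₁ hα hγ hA₁ hA₃ hj (hu t₀))) ?_
  simpa using ((by fun_prop : Continuous fun t => (L₁ * ‖x t - x t₀‖ + α * ‖z t - z t₀‖ +
    γ * |c t - c t₀| + ‖g t - g t₀‖) / (m - β)).tendsto t₀)

end DataDependence

end VariationalInequality

section HistoryDependent

open Function

variable {E : Type*} [MetricSpace E] {T : ℝ} (hT : 0 ≤ T)

/-- `η ∘ projIcc` extends `η` to `ℝ`, so that it can be integrated over `[0, t]`. -/
def IsHistoryDependentOn (Λ : C(Icc (0 : ℝ) T, E) → C(Icc (0 : ℝ) T, E))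
    (M : Set C(Icc (0 : ℝ) T, E)) (C : ℝ) : Prop :=
  ∀ η₁ ∈ M, ∀ η₂ ∈ M, ∀ t : Icc (0 : ℝ) T,
    dist (Λ η₁ t) (Λ η₂ t) ≤
      C * ∫ σ in (0 : ℝ)..t, dist (η₁ (projIcc 0 T hT σ)) (η₂ (projIcc 0 T hT σ))

variable {hT} {Λ : C(Icc (0 : ℝ) T, E) → C(Icc (0 : ℝ) T, E)} {M : Set C(Icc (0 : ℝ) T, E)} {C : ℝ}

lemma IsHistoryDependentOn.dist_iterate_apply_le (hΛ : IsHistoryDependentOn hT Λ M C)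
    (hC : 0 ≤ C) (hmaps : MapsTo Λ M M) (n : ℕ) {η₁ η₂ : C(Icc (0 : ℝ) T, E)} (h₁ : η₁ ∈ M)
    (h₂ : η₂ ∈ M) (t : Icc (0 : ℝ) T) :
    dist (Λ^[n] η₁ t) (Λ^[n] η₂ t) ≤ (C * t) ^ n / n.factorial * dist η₁ η₂ := by
  induction n generalizing t with
  | zero => simpa using ContinuousMap.dist_apply_le_dist t
  | succ n ih =>
    rw [iterate_succ_apply', iterate_succ_apply']
    refine (hΛ _ (hmaps.iterate n h₁) _ (hmaps.iterate n h₂) t).trans ?_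
    have hmono : ∫ σ in (0 : ℝ)..t, dist (Λ^[n] η₁ (projIcc 0 T hT σ)) (Λ^[n] η₂ (projIcc 0 T hT σ))
        ≤ ∫ σ in (0 : ℝ)..t, (C * σ) ^ n / n.factorial * dist η₁ η₂ := by
      refine intervalIntegral.integral_mono_on t.2.1 ?_ ?_ fun σ hσ => ?_
      · exact (by fun_prop : Continuous fun σ =>
          dist (Λ^[n] η₁ (projIcc 0 T hT σ)) (Λ^[n] η₂ (projIcc 0 T hT σ))).intervalIntegrable _ _
      · exact (by fun_prop : Continuous fun σ : ℝ =>
          (C * σ) ^ n / n.factorial * dist η₁ η₂).intervalIntegrable _ _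
      · simpa [projIcc_of_mem hT ⟨hσ.1, hσ.2.trans t.2.2⟩] using ih ⟨σ, hσ.1, hσ.2.trans t.2.2⟩
    refine (mul_le_mul_of_nonneg_left hmono hC).trans_eq ?_
    simp only [mul_pow, div_eq_mul_inv, mul_assoc, intervalIntegral.integral_const_mul,
      intervalIntegral.integral_mul_const, integral_pow]
    push_cast [Nat.factorial_succ]
    field_simp
    ring

lemma IsHistoryDependentOn.dist_iterate_le (hΛ : IsHistoryDependentOn hT Λ M C)
    (hC : 0 ≤ C) (hmaps : MapsTo Λ M M) (n : ℕ) {η₁ η₂ : C(Icc (0 : ℝ) T, E)} (h₁ : η₁ ∈ M)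
    (h₂ : η₂ ∈ M) :
    dist (Λ^[n] η₁) (Λ^[n] η₂) ≤ (C * T) ^ n / n.factorial * dist η₁ η₂ := by
  refine (ContinuousMap.dist_le (by positivity)).2 fun t => ?_
  refine (hΛ.dist_iterate_apply_le hC hmaps n h₁ h₂ t).trans ?_
  gcongr
  · exact mul_nonneg hC t.2.1
  · exact t.2.2

/-- Some iterate `Λ^[n]` is a contraction, since `(C T)ⁿ / n! → 0`. -/
theorem IsHistoryDependentOn.existsUnique_isFixedPt [CompleteSpace E]
    (hΛ : IsHistoryDependentOn hT Λ M C) (hC : 0 ≤ C) (hmaps : MapsTo Λ M M) (hMcl : IsClosed M)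
    (hMne : M.Nonempty) :
    ∃! η, η ∈ M ∧ IsFixedPt Λ η := by
  obtain ⟨n, hn⟩ : ∃ n : ℕ, (C * T) ^ n / n.factorial < 1 :=
    ((FloorSemiring.tendsto_pow_div_factorial_atTop _).eventually (gt_mem_nhds one_pos)).exists
  have hq : 0 ≤ (C * T) ^ n / n.factorial := by positivity
  have huniq : ∀ η ∈ M, ∀ η' ∈ M, IsFixedPt Λ^[n] η → IsFixedPt Λ^[n] η' → η = η' := by
    intro η hη η' hη' hfix hfix'
    have h := hΛ.dist_iterate_le hC hmaps n hη hη'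
    rw [hfix.eq, hfix'.eq] at h
    exact dist_le_zero.1 (by nlinarith [dist_nonneg (x := η) (y := η')])
  have hcon : ContractingWith ⟨_, hq⟩ ((hmaps.iterate n).restrict _ M M) :=
    ⟨hn, LipschitzWith.of_dist_le_mul fun η η' => hΛ.dist_iterate_le hC hmaps n η.2 η'.2⟩
  obtain ⟨η₀, hη₀⟩ := hMne
  obtain ⟨η, hη, hfix, -⟩ :=
    hcon.exists_fixedPoint' hMcl.isComplete (hmaps.iterate n) hη₀ (edist_ne_top _ _)
  refine ⟨η, ⟨hη, huniq _ (hmaps hη) _ hη (hfix.map (Commute.self_iterate Λ n)) hfix⟩,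
    fun η' ⟨hη', hfix'⟩ => huniq _ hη' _ hη (hfix'.iterate n) hfix⟩

end HistoryDependent

theorem stmt3_general
    {V : Type*} [NormedAddCommGroup V] [InnerProductSpace ℝ V] [CompleteSpace V]
    {X : Type*} [NormedAddCommGroup X]
    {Z : Type*} [NormedAddCommGroup Z]
    {Y₁ : Type*} [NormedAddCommGroup Y₁]
    (T : ℝ) (hT : 0 < T)
    (KV : Set V) (hKVne : KV.Nonempty) (hKVcl : IsClosed KV)
    (KY : Set Y₁)
    -- H(A)
    (A : X → V → V) (L₁ L₂ m : ℝ) (hL₁ : 0 < L₁) (hL₂ : 0 < L₂) (hm : 0 < m)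
    (hA₁ : ∀ (a₁ a₂ : X), ∀ b ∈ KV, ‖A a₁ b - A a₂ b‖ ≤ L₁ * ‖a₁ - a₂‖)
    (hA₂ : ∀ (a : X), ∀ b₁ ∈ KV, ∀ b₂ ∈ KV, ‖A a b₁ - A a b₂‖ ≤ L₂ * ‖b₁ - b₂‖)
    (hA₃ : ∀ (a : X), ∀ b₁ ∈ KV, ∀ b₂ ∈ KV,
      m * ‖b₁ - b₂‖ ^ 2 ≤ (inner ℝ (A a b₁ - A a b₂) (b₁ - b₂) : ℝ))
    -- H(j)
    (j : Z → V → ℝ → V → ℝ) (α β γ : ℝ) (hα : 0 < α) (hβ : 0 < β) (hγ : 0 < γ)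
    (hjcv : ∀ (a : Z) (b : V) (c : ℝ), ConvexOn ℝ KV (j a b c))
    (hjlsc : ∀ (a : Z) (b : V) (c : ℝ), LowerSemicontinuousOn (j a b c) KV)
    (hjest : ∀ (a₁ a₂ : Z) (b₁ b₂ : V) (c₁ c₂ : ℝ), ∀ d₁ ∈ KV, ∀ d₂ ∈ KV,
      j a₁ b₁ c₁ d₂ - j a₁ b₁ c₁ d₁ + j a₂ b₂ c₂ d₁ - j a₂ b₂ c₂ d₂ ≤
        α * ‖a₁ - a₂‖ * ‖d₁ - d₂‖ + β * ‖b₁ - b₂‖ * ‖d₁ - d₂‖ +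
          γ * |c₁ - c₂| * ‖d₁ - d₂‖)
    -- H(R)
    (R : C(Set.Icc (0:ℝ) T, V) → C(Set.Icc (0:ℝ) T, Y₁) → C(Set.Icc (0:ℝ) T, X))
    (r₁ : ℝ) (hr₁ : 0 < r₁)
    (hR₁ : ∀ (a₁ a₂ : C(Set.Icc (0:ℝ) T, V)) (b : C(Set.Icc (0:ℝ) T, Y₁)),
      (∀ t, a₁ t ∈ KV) → (∀ t, a₂ t ∈ KV) → (∀ t, b t ∈ KY) →
      ∀ t : Set.Icc (0:ℝ) T, ‖R a₁ b t - R a₂ b t‖ ≤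
        r₁ * ∫ σ in (0:ℝ)..(t:ℝ),
          ‖a₁ (Set.projIcc 0 T hT.le σ) - a₂ (Set.projIcc 0 T hT.le σ)‖)
    -- H(S)
    (S : C(Set.Icc (0:ℝ) T, V) → C(Set.Icc (0:ℝ) T, Z)) (s : ℝ) (hs : 0 < s)
    (hS : ∀ (a₁ a₂ : C(Set.Icc (0:ℝ) T, V)),
      (∀ t, a₁ t ∈ KV) → (∀ t, a₂ t ∈ KV) →
      ∀ t : Set.Icc (0:ℝ) T, ‖S a₁ t - S a₂ t‖ ≤
        s * ∫ σ in (0:ℝ)..(t:ℝ),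
          ‖a₁ (Set.projIcc 0 T hT.le σ) - a₂ (Set.projIcc 0 T hT.le σ)‖)
    -- H(f)
    (f : C(Set.Icc (0:ℝ) T, V))
    -- smallness condition
    (hmβ : β < m)
    -- data
    (w : C(Set.Icc (0:ℝ) T, ℝ))
    (ξ : C(Set.Icc (0:ℝ) T, Y₁)) (hξ : ∀ t, ξ t ∈ KY) :
    ∃! η : C(Set.Icc (0:ℝ) T, V), (∀ t, η t ∈ KV) ∧
      ∀ t : Set.Icc (0:ℝ) T, ∀ v ∈ KV,
        (inner ℝ (A (R η ξ t) (η t)) (v - η t) : ℝ) +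
            j (S η t) (η t) (w t) v - j (S η t) (η t) (w t) (η t) ≥
          (inner ℝ (f t) (v - η t) : ℝ) := by
  have hjβ : ∀ z c b₁ b₂, ∀ d₁ ∈ KV, ∀ d₂ ∈ KV,
      j z b₁ c d₂ - j z b₁ c d₁ + j z b₂ c d₁ - j z b₂ c d₂ ≤ β * ‖b₁ - b₂‖ * ‖d₁ - d₂‖ :=
    fun z c b₁ b₂ d₁ h₁ d₂ h₂ => by simpa using hjest z z b₁ b₂ c c d₁ h₁ d₂ h₂
  have hQVI : ∀ x z c g, ∃! u, IsVISolution KV (A x) (j z u c) g u := fun x z c =>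
    existsUnique_isVISolution_quasi hKVne hKVcl hL₂ hm (hA₂ x) (hA₃ x) (fun b => hjcv z b c)
      (fun b => hjlsc z b c) hβ.le hmβ (hjβ z c)
  choose sol hsol using fun x z c g => (hQVI x z c g).exists
  let Λ : C(Set.Icc (0:ℝ) T, V) → C(Set.Icc (0:ℝ) T, V) := fun η =>
    ⟨fun t => sol (R η ξ t) (S η t) (w t) (f t), continuous_of_forall_isVISolution hL₁.le hα.le
      hγ.le hA₁ hA₃ hjest hmβ (R η ξ).2 (S η).2 w.2 f.2 fun _ => hsol _ _ _ _⟩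
  set M := {η : C(Set.Icc (0:ℝ) T, V) | ∀ t, η t ∈ KV}
  have hΛ : IsHistoryDependentOn hT.le Λ M ((L₁ * r₁ + α * s) / (m - β)) := by
    intro η₁ h₁ η₂ h₂ t
    have h := (hsol (R η₁ ξ t) (S η₁ t) (w t) (f t)).sub_mul_norm_sub_le hL₁.le hα.le hγ.le hA₁
      hA₃ hjest (hsol (R η₂ ξ t) (S η₂ t) (w t) (f t))
    simp only [sub_self, abs_zero, norm_zero, mul_zero, add_zero] at h
    simp only [dist_eq_norm]
    rw [div_mul_eq_mul_div, le_div_iff₀' (sub_pos.2 hmβ)]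
    refine h.trans ?_
    nlinarith [mul_le_mul_of_nonneg_left (hR₁ η₁ η₂ ξ h₁ h₂ hξ t) hL₁.le,
      mul_le_mul_of_nonneg_left (hS η₁ η₂ h₁ h₂ t) hα.le]
  have hMcl : IsClosed M := by
    simpa only [mapsTo_univ_iff] using ContinuousMap.isClosed_setOfPred_mapsTo hKVcl univ
  obtain ⟨v₀, hv₀⟩ := hKVne
  refine (existsUnique_congr fun η => ?_).2 (hΛ.existsUnique_isFixedPt (by positivity)
    (fun η _ t => (hsol _ _ _ _).1) hMcl ⟨.const _ v₀, fun _ => hv₀⟩)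
  rw [← forall_and]
  change (∀ t, IsVISolution KV (A (R η ξ t)) (j (S η t) (η t) (w t)) (f t) (η t)) ↔ _
  refine ⟨fun h => ⟨fun t => (h t).1, ContinuousMap.ext fun t => ?_⟩, fun ⟨_, hfix⟩ t => ?_⟩
  · exact (hQVI _ _ _ _).unique (hsol _ _ _ _) (h t)
  · have h := hsol (R η ξ t) (S η t) (w t) (f t)
    rwa [show sol (R η ξ t) (S η t) (w t) (f t) = η t from DFunLike.congr_fun hfix t] at h

/-- Unique solvability of the history-dependent quasivariational inequality
(Problem 3.1 / Theorem 3.1): under H(A), H(j), H(R), H(S), continuity of `f`, and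
the smallness condition `m > β`, for every continuous `w : I → ℝ` and continuous
`ξ : I → Y₁` with values in `K_Y` there is a unique continuous `η : I → V` with
values in `K_V` solving the quasivariational inequality at every time `t`. -/
theorem stmt3
    {V : Type*} [NormedAddCommGroup V] [InnerProductSpace ℝ V] [CompleteSpace V]
    [TopologicalSpace.SeparableSpace V]
    {X : Type*} [NormedAddCommGroup X] [NormedSpace ℝ X] [CompleteSpace X]
    {Z : Type*} [NormedAddCommGroup Z] [NormedSpace ℝ Z] [CompleteSpace Z]
    {Y₁ : Type*} [NormedAddCommGroup Y₁] [InnerProductSpace ℝ Y₁] [CompleteSpace Y₁]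
    (T : ℝ) (hT : 0 < T)
    (KV : Set V) (hKVne : KV.Nonempty) (hKVcl : IsClosed KV) (hKVcv : Convex ℝ KV)
    (KY : Set Y₁) (hKYne : KY.Nonempty) (hKYcv : Convex ℝ KY)
    -- H(A)
    (A : X → V → V) (L₁ L₂ m : ℝ) (hL₁ : 0 < L₁) (hL₂ : 0 < L₂) (hm : 0 < m)
    (hA₁ : ∀ (a₁ a₂ : X), ∀ b ∈ KV, ‖A a₁ b - A a₂ b‖ ≤ L₁ * ‖a₁ - a₂‖)
    (hA₂ : ∀ (a : X), ∀ b₁ ∈ KV, ∀ b₂ ∈ KV, ‖A a b₁ - A a b₂‖ ≤ L₂ * ‖b₁ - b₂‖)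
    (hA₃ : ∀ (a : X), ∀ b₁ ∈ KV, ∀ b₂ ∈ KV,
      m * ‖b₁ - b₂‖ ^ 2 ≤ (inner ℝ (A a b₁ - A a b₂) (b₁ - b₂) : ℝ))
    -- H(j)
    (j : Z → V → ℝ → V → ℝ) (α β γ : ℝ) (hα : 0 < α) (hβ : 0 < β) (hγ : 0 < γ)
    (hjcv : ∀ (a : Z) (b : V) (c : ℝ), ConvexOn ℝ KV (j a b c))
    (hjlsc : ∀ (a : Z) (b : V) (c : ℝ), LowerSemicontinuousOn (j a b c) KV)
    (hjest : ∀ (a₁ a₂ : Z) (b₁ b₂ : V) (c₁ c₂ : ℝ), ∀ d₁ ∈ KV, ∀ d₂ ∈ KV,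
      j a₁ b₁ c₁ d₂ - j a₁ b₁ c₁ d₁ + j a₂ b₂ c₂ d₁ - j a₂ b₂ c₂ d₂ ≤
        α * ‖a₁ - a₂‖ * ‖d₁ - d₂‖ + β * ‖b₁ - b₂‖ * ‖d₁ - d₂‖ +
          γ * |c₁ - c₂| * ‖d₁ - d₂‖)
    -- H(R)
    (R : C(Set.Icc (0:ℝ) T, V) → C(Set.Icc (0:ℝ) T, Y₁) → C(Set.Icc (0:ℝ) T, X))
    (r₁ r₂ : ℝ) (hr₁ : 0 < r₁) (hr₂ : 0 < r₂)
    (hR₁ : ∀ (a₁ a₂ : C(Set.Icc (0:ℝ) T, V)) (b : C(Set.Icc (0:ℝ) T, Y₁)),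
      (∀ t, a₁ t ∈ KV) → (∀ t, a₂ t ∈ KV) → (∀ t, b t ∈ KY) →
      ∀ t : Set.Icc (0:ℝ) T, ‖R a₁ b t - R a₂ b t‖ ≤
        r₁ * ∫ σ in (0:ℝ)..(t:ℝ),
          ‖a₁ (Set.projIcc 0 T hT.le σ) - a₂ (Set.projIcc 0 T hT.le σ)‖)
    (hR₂ : ∀ (a : C(Set.Icc (0:ℝ) T, V)) (b₁ b₂ : C(Set.Icc (0:ℝ) T, Y₁)),
      (∀ t, a t ∈ KV) → (∀ t, b₁ t ∈ KY) → (∀ t, b₂ t ∈ KY) →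
      ∀ t : Set.Icc (0:ℝ) T, ‖R a b₁ t - R a b₂ t‖ ≤
        r₂ * ∫ σ in (0:ℝ)..(t:ℝ),
          ‖b₁ (Set.projIcc 0 T hT.le σ) - b₂ (Set.projIcc 0 T hT.le σ)‖)
    -- H(S)
    (S : C(Set.Icc (0:ℝ) T, V) → C(Set.Icc (0:ℝ) T, Z)) (s : ℝ) (hs : 0 < s)
    (hS : ∀ (a₁ a₂ : C(Set.Icc (0:ℝ) T, V)),
      (∀ t, a₁ t ∈ KV) → (∀ t, a₂ t ∈ KV) →
      ∀ t : Set.Icc (0:ℝ) T, ‖S a₁ t - S a₂ t‖ ≤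
        s * ∫ σ in (0:ℝ)..(t:ℝ),
          ‖a₁ (Set.projIcc 0 T hT.le σ) - a₂ (Set.projIcc 0 T hT.le σ)‖)
    -- H(f)
    (f : C(Set.Icc (0:ℝ) T, V))
    -- smallness condition
    (hmβ : β < m)
    -- data
    (w : C(Set.Icc (0:ℝ) T, ℝ))
    (ξ : C(Set.Icc (0:ℝ) T, Y₁)) (hξ : ∀ t, ξ t ∈ KY) :
    ∃! η : C(Set.Icc (0:ℝ) T, V), (∀ t, η t ∈ KV) ∧
      ∀ t : Set.Icc (0:ℝ) T, ∀ v ∈ KV,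
        (inner ℝ (A (R η ξ t) (η t)) (v - η t) : ℝ) +
            j (S η t) (η t) (w t) v - j (S η t) (η t) (w t) (η t) ≥
          (inner ℝ (f t) (v - η t) : ℝ) :=
  stmt3_general T hT KV hKVne hKVcl KY A L₁ L₂ m hL₁ hL₂ hm hA₁ hA₂ hA₃ j α β γ hα hβ hγ hjcv hjlsc
    hjest R r₁ hr₁ hR₁ S s hs hS f hmβ w ξ hξ
end

section
/- Let V be a real Hilbert space, X and Z real Banach spaces, K_V ⊆ V nonempty closed convex, and assume hypotheses H(A) (with constants L₁, L₂, m) and H(j) (with constants α, β, γ). For i = 1, 2 let yᵢ ∈ X, zᵢ ∈ Z, uᵢ ∈ V, wᵢ ∈ ℝ, fᵢ ∈ V, and let ηᵢ ∈ K_V satisfy ⟨A(yᵢ, ηᵢ), v − ηᵢ⟩_V + j(zᵢ, uᵢ, wᵢ, v) − j(zᵢ, uᵢ, wᵢ, ηᵢ) ≥ ⟨fᵢ, v − ηᵢ⟩_V for all v ∈ K_V. Then m‖η₁ − η₂‖_V ≤ L₁‖y₁ − y₂‖_X + α‖z₁ − z₂‖_Z + β‖u₁ − u₂‖_V + γ|w₁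 − w₂| + ‖f₁ − f₂‖_V. -/
/-!
Test the inequality for `η₁` with `v = η₂` and the one for `η₂` with `v = η₁` and add them:
the `j`-terms combine into the left side of the estimate in H(j), and the `A`-terms, after
passing from `A y₁ η₁` to `A y₂ η₁` at the cost of `L₁‖y₁ − y₂‖‖η₁ − η₂‖`, are bounded below
by strong monotonicity. This gives `m‖η₁ − η₂‖² ≤ C‖η₁ − η₂‖`, and one divides by `‖η₁ − η₂‖`.
-/

open RealInnerProductSpace

theorem inner_sub_le_of_variational_inequalities {V : Type*} [NormedAddCommGroup V]
    [InnerProductSpace ℝ V] {a₁ a₂ f₁ f₂ η₁ η₂ : V} {φ₁ φ₂ : V → ℝ}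
    (h₁ : ⟪a₁, η₂ - η₁⟫ + φ₁ η₂ - φ₁ η₁ ≥ ⟪f₁, η₂ - η₁⟫)
    (h₂ : ⟪a₂, η₁ - η₂⟫ + φ₂ η₁ - φ₂ η₂ ≥ ⟪f₂, η₁ - η₂⟫) :
    ⟪a₁ - a₂, η₁ - η₂⟫ ≤
      φ₁ η₂ - φ₁ η₁ + φ₂ η₁ - φ₂ η₂ + ⟪f₁ - f₂, η₁ - η₂⟫ := by
  rw [← neg_sub η₁ η₂, inner_neg_right, inner_neg_right] at h₁
  rw [inner_sub_left, inner_sub_left]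
  linarith

theorem mul_le_of_mul_sq_le_mul {m x C : ℝ} (hx : 0 ≤ x) (hC : 0 ≤ C)
    (h : m * x ^ 2 ≤ C * x) : m * x ≤ C := by
  rcases hx.eq_or_lt with rfl | hx
  · simpa using hC
  · exact le_of_mul_le_mul_right (by rwa [mul_assoc, ← sq]) hx

theorem stmt4_general
    {V : Type*} [NormedAddCommGroup V] [InnerProductSpace ℝ V]
    {X : Type*} [NormedAddCommGroup X]
    {Z : Type*} [NormedAddCommGroup Z]
    (KV : Set V)
    -- H(A)
    (A : X → V → V) (L₁ m : ℝ) (hL₁ : 0 < L₁)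
    (hA₁ : ∀ (a₁ a₂ : X), ∀ b ∈ KV, ‖A a₁ b - A a₂ b‖ ≤ L₁ * ‖a₁ - a₂‖)
    (hA₃ : ∀ (a : X), ∀ b₁ ∈ KV, ∀ b₂ ∈ KV,
      m * ‖b₁ - b₂‖ ^ 2 ≤ (inner ℝ (A a b₁ - A a b₂) (b₁ - b₂) : ℝ))
    -- H(j)
    (j : Z → V → ℝ → V → ℝ) (α β γ : ℝ) (hα : 0 < α) (hβ : 0 < β) (hγ : 0 < γ)
    (hjest : ∀ (a₁ a₂ : Z) (b₁ b₂ : V) (c₁ c₂ : ℝ), ∀ d₁ ∈ KV, ∀ d₂ ∈ KV,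
      j a₁ b₁ c₁ d₂ - j a₁ b₁ c₁ d₁ + j a₂ b₂ c₂ d₁ - j a₂ b₂ c₂ d₂ ≤
        α * ‖a₁ - a₂‖ * ‖d₁ - d₂‖ + β * ‖b₁ - b₂‖ * ‖d₁ - d₂‖ +
          γ * |c₁ - c₂| * ‖d₁ - d₂‖)
    -- data and solutions
    (y₁ y₂ : X) (z₁ z₂ : Z) (u₁ u₂ : V) (w₁ w₂ : ℝ) (f₁ f₂ : V)
    (η₁ η₂ : V) (hη₁ : η₁ ∈ KV) (hη₂ : η₂ ∈ KV)
    (hvi₁ : ∀ v ∈ KV, (inner ℝ (A y₁ η₁) (v - η₁) : ℝ) + j z₁ u₁ w₁ v - j z₁ u₁ w₁ η₁ ≥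
      (inner ℝ f₁ (v - η₁) : ℝ))
    (hvi₂ : ∀ v ∈ KV, (inner ℝ (A y₂ η₂) (v - η₂) : ℝ) + j z₂ u₂ w₂ v - j z₂ u₂ w₂ η₂ ≥
      (inner ℝ f₂ (v - η₂) : ℝ)) :
    m * ‖η₁ - η₂‖ ≤ L₁ * ‖y₁ - y₂‖ + α * ‖z₁ - z₂‖ + β * ‖u₁ - u₂‖ +
      γ * |w₁ - w₂| + ‖f₁ - f₂‖ := by
  have hsum := inner_sub_le_of_variational_inequalities (hvi₁ η₂ hη₂) (hvi₂ η₁ hη₁)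
  have hj := hjest z₁ z₂ u₁ u₂ w₁ w₂ η₁ hη₁ η₂ hη₂
  have hmono := hA₃ y₂ η₁ hη₁ η₂ hη₂
  have hshift : ⟪A y₂ η₁ - A y₁ η₁, η₁ - η₂⟫ ≤ L₁ * ‖y₁ - y₂‖ * ‖η₁ - η₂‖ := by
    rw [norm_sub_rev y₁]
    exact (real_inner_le_norm _ _).trans
      (mul_le_mul_of_nonneg_right (hA₁ y₂ y₁ η₁ hη₁) (norm_nonneg _))
  have hsplit : ⟪A y₂ η₁ - A y₂ η₂, η₁ - η₂⟫ =
      ⟪A y₂ η₁ - A y₁ η₁, η₁ - η₂⟫ + ⟪A y₁ η₁ - A y₂ η₂, η₁ - η₂⟫ := by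
    rw [← inner_add_left, sub_add_sub_cancel]
  have hf := real_inner_le_norm (f₁ - f₂) (η₁ - η₂)
  refine mul_le_of_mul_sq_le_mul (norm_nonneg _) (by positivity) ?_
  linarith

/-- Stability estimate for solutions of the elliptic quasivariational inequality:
under H(A) and H(j), two solutions `η₁, η₂` corresponding to data
`(yᵢ, zᵢ, uᵢ, wᵢ, fᵢ)` satisfy
`m‖η₁ − η₂‖ ≤ L₁‖y₁ − y₂‖ + α‖z₁ − z₂‖ + β‖u₁ − u₂‖ + γ|w₁ − w₂| + ‖f₁ − f₂‖`. -/
theorem stmt4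
    {V : Type*} [NormedAddCommGroup V] [InnerProductSpace ℝ V] [CompleteSpace V]
    {X : Type*} [NormedAddCommGroup X] [NormedSpace ℝ X] [CompleteSpace X]
    {Z : Type*} [NormedAddCommGroup Z] [NormedSpace ℝ Z] [CompleteSpace Z]
    (KV : Set V) (hKVne : KV.Nonempty) (hKVcl : IsClosed KV) (hKVcv : Convex ℝ KV)
    -- H(A)
    (A : X → V → V) (L₁ L₂ m : ℝ) (hL₁ : 0 < L₁) (hL₂ : 0 < L₂) (hm : 0 < m)
    (hA₁ : ∀ (a₁ a₂ : X), ∀ b ∈ KV, ‖A a₁ b - A a₂ b‖ ≤ L₁ * ‖a₁ - a₂‖)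
    (hA₂ : ∀ (a : X), ∀ b₁ ∈ KV, ∀ b₂ ∈ KV, ‖A a b₁ - A a b₂‖ ≤ L₂ * ‖b₁ - b₂‖)
    (hA₃ : ∀ (a : X), ∀ b₁ ∈ KV, ∀ b₂ ∈ KV,
      m * ‖b₁ - b₂‖ ^ 2 ≤ (inner ℝ (A a b₁ - A a b₂) (b₁ - b₂) : ℝ))
    -- H(j)
    (j : Z → V → ℝ → V → ℝ) (α β γ : ℝ) (hα : 0 < α) (hβ : 0 < β) (hγ : 0 < γ)
    (hjcv : ∀ (a : Z) (b : V) (c : ℝ), ConvexOn ℝ KV (j a b c))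
    (hjlsc : ∀ (a : Z) (b : V) (c : ℝ), LowerSemicontinuousOn (j a b c) KV)
    (hjest : ∀ (a₁ a₂ : Z) (b₁ b₂ : V) (c₁ c₂ : ℝ), ∀ d₁ ∈ KV, ∀ d₂ ∈ KV,
      j a₁ b₁ c₁ d₂ - j a₁ b₁ c₁ d₁ + j a₂ b₂ c₂ d₁ - j a₂ b₂ c₂ d₂ ≤
        α * ‖a₁ - a₂‖ * ‖d₁ - d₂‖ + β * ‖b₁ - b₂‖ * ‖d₁ - d₂‖ +
          γ * |c₁ - c₂| * ‖d₁ - d₂‖)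
    -- data and solutions
    (y₁ y₂ : X) (z₁ z₂ : Z) (u₁ u₂ : V) (w₁ w₂ : ℝ) (f₁ f₂ : V)
    (η₁ η₂ : V) (hη₁ : η₁ ∈ KV) (hη₂ : η₂ ∈ KV)
    (hvi₁ : ∀ v ∈ KV, (inner ℝ (A y₁ η₁) (v - η₁) : ℝ) + j z₁ u₁ w₁ v - j z₁ u₁ w₁ η₁ ≥
      (inner ℝ f₁ (v - η₁) : ℝ))
    (hvi₂ : ∀ v ∈ KV, (inner ℝ (A y₂ η₂) (v - η₂) : ℝ) + j z₂ u₂ w₂ v - j z₂ u₂ w₂ η₂ ≥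
      (inner ℝ f₂ (v - η₂) : ℝ)) :
    m * ‖η₁ - η₂‖ ≤ L₁ * ‖y₁ - y₂‖ + α * ‖z₁ - z₂‖ + β * ‖u₁ - u₂‖ +
      γ * |w₁ - w₂| + ‖f₁ - f₂‖ :=
  stmt4_general KV A L₁ m hL₁ hA₁ hA₃ j α β γ hα hβ hγ hjest y₁ y₂ z₁ z₂ u₁ u₂ w₁ w₂ f₁ f₂ η₁ η₂ hη₁
    hη₂ hvi₁ hvi₂
end

section
/- Let T > 0, I = [0,T], V a real Hilbert space, X, Z real Banach spaces, Y₁ a real Hilbert space, K_V ⊆ V nonempty closed convex, K_Y ⊆ Y₁ nonempty convex. Assume H(A) (constants L₁, L₂, m), H(j) (constants α, β, γ), H(R) (constants r₁, r₂), H(S) (constant s), with m > β. Fix a continuous ξ : I → Y₁ with values in K_Y and f ∈ C(I; V). For continuous functions w₁, w₂ : I → ℝ let η₁, η₂ ∈ C(I; K_V) be such that for i = 1, 2, all t ∈ I and all v ∈ K_V: ⟨A(R(ηᵢ, ξ)(t), ηᵢ(t)), v − ηᵢ(t)⟩_V + j(Sηᵢ(t), ηᵢ(t), wᵢ(t), v)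 − j(Sηᵢ(t), ηᵢ(t), wᵢ(t), ηᵢ(t)) ≥ ⟨f(t), v − ηᵢ(t)⟩_V. Then for all t ∈ I: ‖η₁(t) − η₂(t)‖_V ≤ ((L₁r₁ + αs)/(m − β)) ∫₀ᵗ‖η₁(σ) − η₂(σ)‖_V dσ + (γ/(m − β)) sup_{σ∈I}|w₁(σ) − w₂(σ)|. Moreover, if in addition m > β + T(L₁r₁ + αs), then sup_{t∈I}‖η₁(t) − η₂(t)‖_V ≤ (γ/(m − β − T(L₁r₁ + αs))) sup_{σ∈I}|w₁(σ) − w₂(σ)|. -/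
open scoped ContinuousMap

/-!
Test the variational inequality for `η₁` with `v = η₂(t)` and the one for `η₂` with `v = η₁(t)`
and add them: strong monotonicity of `A(a, ·)` and the estimate on `j` leave
`(m - β)‖η₁(t) - η₂(t)‖ ≤ L₁‖R(η₁,ξ)(t) - R(η₂,ξ)(t)‖ + α‖Sη₁(t) - Sη₂(t)‖ + γ|w₁(t) - w₂(t)|`,
and the integral bounds in H(R), H(S) turn this into the first estimate. Bounding the integral
by `T` times the supremum and taking the supremum over `t` gives the second one.
-/

theorem mul_le_of_mul_sq_le_mul_s6 {a x D : ℝ} (hx : 0 ≤ x) (hD : 0 ≤ D)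
    (h : a * x ^ 2 ≤ D * x) : a * x ≤ D := by
  rcases hx.eq_or_lt with rfl | hx
  · simpa using hD
  · exact le_of_mul_le_mul_right (by linarith) hx

section StaticEstimate

variable {V : Type*} [NormedAddCommGroup V] [InnerProductSpace ℝ V]

theorem inner_sub_le_of_variationalInequality {B₁ B₂ f u₁ u₂ : V} {φ₁ φ₂ : V → ℝ}
    (h₁ : inner ℝ B₁ (u₂ - u₁) + φ₁ u₂ - φ₁ u₁ ≥ inner ℝ f (u₂ - u₁))
    (h₂ : inner ℝ B₂ (u₁ - u₂) + φ₂ u₁ - φ₂ u₂ ≥ inner ℝ f (u₁ - u₂)) :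
    inner ℝ (B₁ - B₂) (u₁ - u₂) ≤ φ₁ u₂ - φ₁ u₁ + φ₂ u₁ - φ₂ u₂ := by
  have hswap : ∀ w : V, inner ℝ w (u₂ - u₁) = -inner ℝ w (u₁ - u₂) := fun w => by
    rw [← neg_sub, inner_neg_right]
  rw [hswap, hswap] at h₁
  rw [inner_sub_left]
  linarith

theorem sub_mul_norm_sub_le_of_variationalInequality
    {X Z : Type*} [NormedAddCommGroup X] [NormedAddCommGroup Z]
    {K : Set V} {A : X → V → V} {j : Z → V → ℝ → V → ℝ} {L₁ m α β γ : ℝ}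
    (hL₁ : 0 ≤ L₁) (hα : 0 ≤ α) (hγ : 0 ≤ γ)
    (hA₁ : ∀ (a₁ a₂ : X), ∀ b ∈ K, ‖A a₁ b - A a₂ b‖ ≤ L₁ * ‖a₁ - a₂‖)
    (hA₃ : ∀ (a : X), ∀ b₁ ∈ K, ∀ b₂ ∈ K,
      m * ‖b₁ - b₂‖ ^ 2 ≤ (inner ℝ (A a b₁ - A a b₂) (b₁ - b₂) : ℝ))
    (hjest : ∀ (a₁ a₂ : Z) (b₁ b₂ : V) (c₁ c₂ : ℝ), ∀ d₁ ∈ K, ∀ d₂ ∈ K,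
      j a₁ b₁ c₁ d₂ - j a₁ b₁ c₁ d₁ + j a₂ b₂ c₂ d₁ - j a₂ b₂ c₂ d₂ ≤
        α * ‖a₁ - a₂‖ * ‖d₁ - d₂‖ + β * ‖b₁ - b₂‖ * ‖d₁ - d₂‖ +
          γ * |c₁ - c₂| * ‖d₁ - d₂‖)
    {f u₁ u₂ : V} {x₁ x₂ : X} {z₁ z₂ : Z} {c₁ c₂ : ℝ} (hu₁ : u₁ ∈ K) (hu₂ : u₂ ∈ K)
    (h₁ : ∀ v ∈ K, inner ℝ (A x₁ u₁) (v - u₁) + j z₁ u₁ c₁ v - j z₁ u₁ c₁ u₁ ≥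
      inner ℝ f (v - u₁))
    (h₂ : ∀ v ∈ K, inner ℝ (A x₂ u₂) (v - u₂) + j z₂ u₂ c₂ v - j z₂ u₂ c₂ u₂ ≥
      inner ℝ f (v - u₂)) :
    (m - β) * ‖u₁ - u₂‖ ≤ L₁ * ‖x₁ - x₂‖ + α * ‖z₁ - z₂‖ + γ * |c₁ - c₂| := by
  have hvi := inner_sub_le_of_variationalInequality (h₁ u₂ hu₂) (h₂ u₁ hu₁)
  have hsplit : inner ℝ (A x₁ u₁ - A x₂ u₂) (u₁ - u₂) =
      inner ℝ (A x₁ u₁ - A x₂ u₁) (u₁ - u₂) + inner ℝ (A x₂ u₁ - A x₂ u₂) (u₁ - u₂) := by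
    rw [← inner_add_left, sub_add_sub_cancel]
  have hperturb : -(L₁ * ‖x₁ - x₂‖ * ‖u₁ - u₂‖) ≤ inner ℝ (A x₁ u₁ - A x₂ u₁) (u₁ - u₂) :=
    calc -(L₁ * ‖x₁ - x₂‖ * ‖u₁ - u₂‖) ≤ -(‖A x₁ u₁ - A x₂ u₁‖ * ‖u₁ - u₂‖) := by
          gcongr; exact hA₁ x₁ x₂ u₁ hu₁
      _ ≤ _ := neg_le_of_abs_le (abs_real_inner_le_norm _ _)
  have hmono := hA₃ x₂ u₁ hu₁ u₂ hu₂
  have hj := hjest z₁ z₂ u₁ u₂ c₁ c₂ u₁ hu₁ u₂ hu₂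
  refine mul_le_of_mul_sq_le_mul_s6 (norm_nonneg _) (by positivity) ?_
  linarith

end StaticEstimate

theorem iSup_le_div_of_le_integral {T a b c : ℝ} (hT : 0 ≤ T) {g : Set.Icc (0:ℝ) T → ℝ}
    (hg : Continuous g) (hg₀ : ∀ t, 0 ≤ g t) (hc : 0 ≤ c) (hTc : T * c < a)
    (h : ∀ t : Set.Icc (0:ℝ) T,
      a * g t ≤ c * (∫ σ in (0:ℝ)..(t:ℝ), g (Set.projIcc 0 T hT σ)) + b) :
    ⨆ t, g t ≤ b / (a - T * c) := by
  have ha : 0 < a := lt_of_le_of_lt (mul_nonneg hT hc) hTc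
  set M := ⨆ t, g t
  have hle : ∀ t, g t ≤ M := le_ciSup (isCompact_range hg).bddAbove
  have hM₀ : 0 ≤ M := (hg₀ ⟨0, Set.left_mem_Icc.2 hT⟩).trans (hle _)
  have hint : ∀ t : Set.Icc (0:ℝ) T,
      ∫ σ in (0:ℝ)..(t:ℝ), g (Set.projIcc 0 T hT σ) ≤ T * M := fun t =>
    calc ∫ σ in (0:ℝ)..(t:ℝ), g (Set.projIcc 0 T hT σ)
        ≤ ∫ _ in (0:ℝ)..(t:ℝ), M :=
          intervalIntegral.integral_mono_on t.2.1
            ((hg.comp continuous_projIcc).intervalIntegrable _ _) intervalIntegrable_const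
            fun σ _ => hle _
      _ = t * M := by simp
      _ ≤ T * M := by gcongr; exact t.2.2
  haveI : Nonempty (Set.Icc (0:ℝ) T) := ⟨⟨0, Set.left_mem_Icc.2 hT⟩⟩
  have haM : M * a ≤ c * (T * M) + b := by
    rw [← le_div_iff₀ ha]
    refine ciSup_le fun t => ?_
    rw [le_div_iff₀ ha, mul_comm]
    exact (h t).trans (by gcongr; exact hint t)
  rw [le_div_iff₀ (by linarith)]
  linarith

theorem stmt6_general
    {V : Type*} [NormedAddCommGroup V] [InnerProductSpace ℝ V]
    {X : Type*} [NormedAddCommGroup X]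
    {Z : Type*} [NormedAddCommGroup Z]
    {Y₁ : Type*} [NormedAddCommGroup Y₁]
    (T : ℝ) (hT : 0 < T)
    (KV : Set V)
    (KY : Set Y₁)
    -- H(A)
    (A : X → V → V) (L₁ m : ℝ) (hL₁ : 0 < L₁)
    (hA₁ : ∀ (a₁ a₂ : X), ∀ b ∈ KV, ‖A a₁ b - A a₂ b‖ ≤ L₁ * ‖a₁ - a₂‖)
    (hA₃ : ∀ (a : X), ∀ b₁ ∈ KV, ∀ b₂ ∈ KV,
      m * ‖b₁ - b₂‖ ^ 2 ≤ (inner ℝ (A a b₁ - A a b₂) (b₁ - b₂) : ℝ))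
    -- H(j)
    (j : Z → V → ℝ → V → ℝ) (α β γ : ℝ) (hα : 0 < α) (hγ : 0 < γ)
    (hjest : ∀ (a₁ a₂ : Z) (b₁ b₂ : V) (c₁ c₂ : ℝ), ∀ d₁ ∈ KV, ∀ d₂ ∈ KV,
      j a₁ b₁ c₁ d₂ - j a₁ b₁ c₁ d₁ + j a₂ b₂ c₂ d₁ - j a₂ b₂ c₂ d₂ ≤
        α * ‖a₁ - a₂‖ * ‖d₁ - d₂‖ + β * ‖b₁ - b₂‖ * ‖d₁ - d₂‖ +
          γ * |c₁ - c₂| * ‖d₁ - d₂‖)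
    -- H(R)
    (R : C(Set.Icc (0:ℝ) T, V) → C(Set.Icc (0:ℝ) T, Y₁) → C(Set.Icc (0:ℝ) T, X))
    (r₁ : ℝ) (hr₁ : 0 < r₁)
    (hR₁ : ∀ (a₁ a₂ : C(Set.Icc (0:ℝ) T, V)) (b : C(Set.Icc (0:ℝ) T, Y₁)),
      (∀ t, a₁ t ∈ KV) → (∀ t, a₂ t ∈ KV) → (∀ t, b t ∈ KY) →
      ∀ t : Set.Icc (0:ℝ) T, ‖R a₁ b t - R a₂ b t‖ ≤
        r₁ * ∫ σ in (0:ℝ)..(t:ℝ),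
          ‖a₁ (Set.projIcc 0 T hT.le σ) - a₂ (Set.projIcc 0 T hT.le σ)‖)
    -- H(S)
    (S : C(Set.Icc (0:ℝ) T, V) → C(Set.Icc (0:ℝ) T, Z)) (s : ℝ) (hs : 0 < s)
    (hS : ∀ (a₁ a₂ : C(Set.Icc (0:ℝ) T, V)),
      (∀ t, a₁ t ∈ KV) → (∀ t, a₂ t ∈ KV) →
      ∀ t : Set.Icc (0:ℝ) T, ‖S a₁ t - S a₂ t‖ ≤
        s * ∫ σ in (0:ℝ)..(t:ℝ),
          ‖a₁ (Set.projIcc 0 T hT.le σ) - a₂ (Set.projIcc 0 T hT.le σ)‖)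
    -- smallness condition
    (hmβ : β < m)
    -- fixed data
    (ξ : C(Set.Icc (0:ℝ) T, Y₁)) (hξ : ∀ t, ξ t ∈ KY)
    (f : C(Set.Icc (0:ℝ) T, V))
    -- the two wear inputs and corresponding solutions
    (w₁ w₂ : C(Set.Icc (0:ℝ) T, ℝ))
    (η₁ η₂ : C(Set.Icc (0:ℝ) T, V))
    (hη₁ : ∀ t, η₁ t ∈ KV) (hη₂ : ∀ t, η₂ t ∈ KV)
    (hvi₁ : ∀ t : Set.Icc (0:ℝ) T, ∀ v ∈ KV,
      (inner ℝ (A (R η₁ ξ t) (η₁ t)) (v - η₁ t) : ℝ) +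
          j (S η₁ t) (η₁ t) (w₁ t) v - j (S η₁ t) (η₁ t) (w₁ t) (η₁ t) ≥
        (inner ℝ (f t) (v - η₁ t) : ℝ))
    (hvi₂ : ∀ t : Set.Icc (0:ℝ) T, ∀ v ∈ KV,
      (inner ℝ (A (R η₂ ξ t) (η₂ t)) (v - η₂ t) : ℝ) +
          j (S η₂ t) (η₂ t) (w₂ t) v - j (S η₂ t) (η₂ t) (w₂ t) (η₂ t) ≥
        (inner ℝ (f t) (v - η₂ t) : ℝ)) :
    (∀ t : Set.Icc (0:ℝ) T,
      ‖η₁ t - η₂ t‖ ≤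
        ((L₁ * r₁ + α * s) / (m - β)) * (∫ σ in (0:ℝ)..(t:ℝ),
            ‖η₁ (Set.projIcc 0 T hT.le σ) - η₂ (Set.projIcc 0 T hT.le σ)‖) +
          (γ / (m - β)) * ⨆ σ : Set.Icc (0:ℝ) T, |w₁ σ - w₂ σ|) ∧
    (β + T * (L₁ * r₁ + α * s) < m →
      (⨆ t : Set.Icc (0:ℝ) T, ‖η₁ t - η₂ t‖) ≤
        (γ / (m - β - T * (L₁ * r₁ + α * s))) *
          ⨆ σ : Set.Icc (0:ℝ) T, |w₁ σ - w₂ σ|) := by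
  have hW : ∀ t : Set.Icc (0:ℝ) T, |w₁ t - w₂ t| ≤ ⨆ σ : Set.Icc (0:ℝ) T, |w₁ σ - w₂ σ| :=
    le_ciSup (isCompact_range (w₁.continuous.sub w₂.continuous).abs).bddAbove
  have hpointwise : ∀ t : Set.Icc (0:ℝ) T, (m - β) * ‖η₁ t - η₂ t‖ ≤
      (L₁ * r₁ + α * s) * (∫ σ in (0:ℝ)..(t:ℝ),
          ‖η₁ (Set.projIcc 0 T hT.le σ) - η₂ (Set.projIcc 0 T hT.le σ)‖) +
        γ * ⨆ σ : Set.Icc (0:ℝ) T, |w₁ σ - w₂ σ| := by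
    intro t
    calc (m - β) * ‖η₁ t - η₂ t‖
        ≤ L₁ * ‖R η₁ ξ t - R η₂ ξ t‖ + α * ‖S η₁ t - S η₂ t‖ + γ * |w₁ t - w₂ t| :=
          sub_mul_norm_sub_le_of_variationalInequality hL₁.le hα.le hγ.le hA₁ hA₃ hjest
            (hη₁ t) (hη₂ t) (hvi₁ t) (hvi₂ t)
      _ ≤ _ := by
          linarith [mul_le_mul_of_nonneg_left (hR₁ η₁ η₂ ξ hη₁ hη₂ hξ t) hL₁.le,
            mul_le_mul_of_nonneg_left (hS η₁ η₂ hη₁ hη₂ t) hα.le,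
            mul_le_mul_of_nonneg_left (hW t) hγ.le]
  have hmβ' : 0 < m - β := sub_pos.2 hmβ
  refine ⟨fun t => ?_, fun hsmall => ?_⟩
  · rw [div_mul_eq_mul_div, div_mul_eq_mul_div, ← add_div, le_div_iff₀ hmβ', mul_comm]
    exact hpointwise t
  · rw [div_mul_eq_mul_div]
    exact iSup_le_div_of_le_integral (g := fun t => ‖η₁ t - η₂ t‖) hT.le
      (η₁.continuous.sub η₂.continuous).norm
      (fun t => norm_nonneg _) (by positivity) (by linarith) hpointwise

/-- The estimate from the proof of Theorem 3.2: if `ηᵢ` solves the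
quasivariational inequality with data `wᵢ` (`i = 1, 2`) and `m > β`, then
`‖η₁(t) − η₂(t)‖ ≤ ((L₁r₁ + αs)/(m − β)) ∫₀ᵗ‖η₁ − η₂‖ + (γ/(m − β)) sup|w₁ − w₂|`
for all `t`, and if moreover `m > β + T(L₁r₁ + αs)` then
`sup‖η₁ − η₂‖ ≤ (γ/(m − β − T(L₁r₁ + αs))) sup|w₁ − w₂|`. -/
theorem stmt6
    {V : Type*} [NormedAddCommGroup V] [InnerProductSpace ℝ V] [CompleteSpace V]
    {X : Type*} [NormedAddCommGroup X] [NormedSpace ℝ X] [CompleteSpace X]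
    {Z : Type*} [NormedAddCommGroup Z] [NormedSpace ℝ Z] [CompleteSpace Z]
    {Y₁ : Type*} [NormedAddCommGroup Y₁] [InnerProductSpace ℝ Y₁] [CompleteSpace Y₁]
    (T : ℝ) (hT : 0 < T)
    (KV : Set V) (hKVne : KV.Nonempty) (hKVcl : IsClosed KV) (hKVcv : Convex ℝ KV)
    (KY : Set Y₁) (hKYne : KY.Nonempty) (hKYcv : Convex ℝ KY)
    -- H(A)
    (A : X → V → V) (L₁ L₂ m : ℝ) (hL₁ : 0 < L₁) (hL₂ : 0 < L₂) (hm : 0 < m)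
    (hA₁ : ∀ (a₁ a₂ : X), ∀ b ∈ KV, ‖A a₁ b - A a₂ b‖ ≤ L₁ * ‖a₁ - a₂‖)
    (hA₂ : ∀ (a : X), ∀ b₁ ∈ KV, ∀ b₂ ∈ KV, ‖A a b₁ - A a b₂‖ ≤ L₂ * ‖b₁ - b₂‖)
    (hA₃ : ∀ (a : X), ∀ b₁ ∈ KV, ∀ b₂ ∈ KV,
      m * ‖b₁ - b₂‖ ^ 2 ≤ (inner ℝ (A a b₁ - A a b₂) (b₁ - b₂) : ℝ))
    -- H(j)
    (j : Z → V → ℝ → V → ℝ) (α β γ : ℝ) (hα : 0 < α) (hβ : 0 < β) (hγ : 0 < γ)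
    (hjcv : ∀ (a : Z) (b : V) (c : ℝ), ConvexOn ℝ KV (j a b c))
    (hjlsc : ∀ (a : Z) (b : V) (c : ℝ), LowerSemicontinuousOn (j a b c) KV)
    (hjest : ∀ (a₁ a₂ : Z) (b₁ b₂ : V) (c₁ c₂ : ℝ), ∀ d₁ ∈ KV, ∀ d₂ ∈ KV,
      j a₁ b₁ c₁ d₂ - j a₁ b₁ c₁ d₁ + j a₂ b₂ c₂ d₁ - j a₂ b₂ c₂ d₂ ≤
        α * ‖a₁ - a₂‖ * ‖d₁ - d₂‖ + β * ‖b₁ - b₂‖ * ‖d₁ - d₂‖ +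
          γ * |c₁ - c₂| * ‖d₁ - d₂‖)
    -- H(R)
    (R : C(Set.Icc (0:ℝ) T, V) → C(Set.Icc (0:ℝ) T, Y₁) → C(Set.Icc (0:ℝ) T, X))
    (r₁ r₂ : ℝ) (hr₁ : 0 < r₁) (hr₂ : 0 < r₂)
    (hR₁ : ∀ (a₁ a₂ : C(Set.Icc (0:ℝ) T, V)) (b : C(Set.Icc (0:ℝ) T, Y₁)),
      (∀ t, a₁ t ∈ KV) → (∀ t, a₂ t ∈ KV) → (∀ t, b t ∈ KY) →
      ∀ t : Set.Icc (0:ℝ) T, ‖R a₁ b t - R a₂ b t‖ ≤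
        r₁ * ∫ σ in (0:ℝ)..(t:ℝ),
          ‖a₁ (Set.projIcc 0 T hT.le σ) - a₂ (Set.projIcc 0 T hT.le σ)‖)
    (hR₂ : ∀ (a : C(Set.Icc (0:ℝ) T, V)) (b₁ b₂ : C(Set.Icc (0:ℝ) T, Y₁)),
      (∀ t, a t ∈ KV) → (∀ t, b₁ t ∈ KY) → (∀ t, b₂ t ∈ KY) →
      ∀ t : Set.Icc (0:ℝ) T, ‖R a b₁ t - R a b₂ t‖ ≤
        r₂ * ∫ σ in (0:ℝ)..(t:ℝ),
          ‖b₁ (Set.projIcc 0 T hT.le σ) - b₂ (Set.projIcc 0 T hT.le σ)‖)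
    -- H(S)
    (S : C(Set.Icc (0:ℝ) T, V) → C(Set.Icc (0:ℝ) T, Z)) (s : ℝ) (hs : 0 < s)
    (hS : ∀ (a₁ a₂ : C(Set.Icc (0:ℝ) T, V)),
      (∀ t, a₁ t ∈ KV) → (∀ t, a₂ t ∈ KV) →
      ∀ t : Set.Icc (0:ℝ) T, ‖S a₁ t - S a₂ t‖ ≤
        s * ∫ σ in (0:ℝ)..(t:ℝ),
          ‖a₁ (Set.projIcc 0 T hT.le σ) - a₂ (Set.projIcc 0 T hT.le σ)‖)
    -- smallness condition
    (hmβ : β < m)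
    -- fixed data
    (ξ : C(Set.Icc (0:ℝ) T, Y₁)) (hξ : ∀ t, ξ t ∈ KY)
    (f : C(Set.Icc (0:ℝ) T, V))
    -- the two wear inputs and corresponding solutions
    (w₁ w₂ : C(Set.Icc (0:ℝ) T, ℝ))
    (η₁ η₂ : C(Set.Icc (0:ℝ) T, V))
    (hη₁ : ∀ t, η₁ t ∈ KV) (hη₂ : ∀ t, η₂ t ∈ KV)
    (hvi₁ : ∀ t : Set.Icc (0:ℝ) T, ∀ v ∈ KV,
      (inner ℝ (A (R η₁ ξ t) (η₁ t)) (v - η₁ t) : ℝ) +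
          j (S η₁ t) (η₁ t) (w₁ t) v - j (S η₁ t) (η₁ t) (w₁ t) (η₁ t) ≥
        (inner ℝ (f t) (v - η₁ t) : ℝ))
    (hvi₂ : ∀ t : Set.Icc (0:ℝ) T, ∀ v ∈ KV,
      (inner ℝ (A (R η₂ ξ t) (η₂ t)) (v - η₂ t) : ℝ) +
          j (S η₂ t) (η₂ t) (w₂ t) v - j (S η₂ t) (η₂ t) (w₂ t) (η₂ t) ≥
        (inner ℝ (f t) (v - η₂ t) : ℝ)) :
    (∀ t : Set.Icc (0:ℝ) T,
      ‖η₁ t - η₂ t‖ ≤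
        ((L₁ * r₁ + α * s) / (m - β)) * (∫ σ in (0:ℝ)..(t:ℝ),
            ‖η₁ (Set.projIcc 0 T hT.le σ) - η₂ (Set.projIcc 0 T hT.le σ)‖) +
          (γ / (m - β)) * ⨆ σ : Set.Icc (0:ℝ) T, |w₁ σ - w₂ σ|) ∧
    (β + T * (L₁ * r₁ + α * s) < m →
      (⨆ t : Set.Icc (0:ℝ) T, ‖η₁ t - η₂ t‖) ≤
        (γ / (m - β - T * (L₁ * r₁ + α * s))) *
          ⨆ σ : Set.Icc (0:ℝ) T, |w₁ σ - w₂ σ|) :=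
  stmt6_general T hT KV KY A L₁ m hL₁ hA₁ hA₃ j α β γ hα hγ hjest R r₁ hr₁ hR₁ S s hs hS hmβ ξ hξ f
    w₁ w₂ η₁ η₂ hη₁ hη₂ hvi₁ hvi₂
end

section
/- Let T > 0, I = [0,T], V a real Hilbert space, X, Z real Banach spaces, Y₁ a real Hilbert space, K_V ⊆ V nonempty closed convex, K_Y ⊆ Y₁ nonempty convex. Assume H(A) (constants L₁, L₂, m), H(j) (constants α, β, γ), H(R) (constants r₁, r₂), H(S) (constant s), with m > β, and fix f ∈ C(I; V). For i = 1, 2 let ξᵢ : I → Y₁ be continuous with values in K_Y, wᵢ : I → ℝ continuous, and let ηᵢ ∈ C(I; K_V) satisfy for all t ∈ I and all v ∈ K_V: ⟨A(R(ηᵢ, ξᵢ)(t), ηᵢ(t)), v − ηᵢ(t)⟩_V + j(Sηᵢ(t), ηᵢ(t), wᵢ(t), v) − j(Sηᵢ(t), ηᵢ(t), wᵢ(t), ηᵢ(t)) ≥ ⟨f(t), v − ηᵢ(t)⟩_V. Then for all t ∈ I: ‖η₁(t) − η₂(t)‖_V ≤ ((L₁r₁ + αs)/(m − β)) ∫₀ᵗ‖η₁(σ)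 − η₂(σ)‖_V dσ + (L₁r₂/(m − β)) ∫₀ᵗ‖ξ₁(σ) − ξ₂(σ)‖_{Y₁} dσ + (γ/(m − β)) |w₁(t) − w₂(t)|. -/
open scoped ContinuousMap

/-!
Test the inequality for `η₁(t)` with `v = η₂(t)` and the one for `η₂(t)` with `v = η₁(t)` and add
them. Strong monotonicity of `A(R(η₁, ξ₁)(t), ·)` bounds `m‖η₁(t) − η₂(t)‖²` by the cross term
of `A` (Lipschitz in its first argument, so controlled by `‖R(η₁, ξ₁)(t) − R(η₂, ξ₂)(t)‖`) plus
the cross term of `j`. The `β`-part of the latter is absorbed into the left-hand side, and the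
history-dependent operators `R` and `S` turn the remaining differences into integrals.
-/

theorem mul_norm_sub_sq_le_of_variationalInequality {V : Type*} [NormedAddCommGroup V]
    [InnerProductSpace ℝ V] {B₁ B₂ : V → V} {φ₁ φ₂ : V → ℝ} {f u₁ u₂ : V} {m a b : ℝ}
    (h₁ : inner ℝ (B₁ u₁) (u₂ - u₁) + φ₁ u₂ - φ₁ u₁ ≥ inner ℝ f (u₂ - u₁))
    (h₂ : inner ℝ (B₂ u₂) (u₁ - u₂) + φ₂ u₁ - φ₂ u₂ ≥ inner ℝ f (u₁ - u₂))
    (hmono : m * ‖u₁ - u₂‖ ^ 2 ≤ inner ℝ (B₁ u₁ - B₁ u₂) (u₁ - u₂))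
    (hB : ‖B₁ u₂ - B₂ u₂‖ ≤ a)
    (hφ : φ₁ u₂ - φ₁ u₁ + φ₂ u₁ - φ₂ u₂ ≤ b * ‖u₁ - u₂‖) :
    m * ‖u₁ - u₂‖ ^ 2 ≤ (a + b) * ‖u₁ - u₂‖ := by
  set d := u₁ - u₂
  have hswap : u₂ - u₁ = -d := (neg_sub u₁ u₂).symm
  rw [hswap, inner_neg_right, inner_neg_right] at h₁
  have hcross : inner ℝ (B₂ u₂ - B₁ u₂) d ≤ a * ‖d‖ :=
    (real_inner_le_norm _ _).trans <| by
      rw [norm_sub_rev]; exact mul_le_mul_of_nonneg_right hB (norm_nonneg d)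
  have hsplit : inner ℝ (B₁ u₁ - B₁ u₂) d =
      inner ℝ (B₁ u₁) d - inner ℝ (B₂ u₂) d + inner ℝ (B₂ u₂ - B₁ u₂) d := by
    simp only [inner_sub_left]; ring
  linarith

theorem stmt7_general
    {V : Type*} [NormedAddCommGroup V] [InnerProductSpace ℝ V]
    {X : Type*} [NormedAddCommGroup X]
    {Z : Type*} [NormedAddCommGroup Z]
    {Y₁ : Type*} [NormedAddCommGroup Y₁]
    (T : ℝ) (hT : 0 < T)
    (KV : Set V)
    (KY : Set Y₁)
    -- H(A)
    (A : X → V → V) (L₁ m : ℝ) (hL₁ : 0 < L₁)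
    (hA₁ : ∀ (a₁ a₂ : X), ∀ b ∈ KV, ‖A a₁ b - A a₂ b‖ ≤ L₁ * ‖a₁ - a₂‖)
    (hA₃ : ∀ (a : X), ∀ b₁ ∈ KV, ∀ b₂ ∈ KV,
      m * ‖b₁ - b₂‖ ^ 2 ≤ (inner ℝ (A a b₁ - A a b₂) (b₁ - b₂) : ℝ))
    -- H(j)
    (j : Z → V → ℝ → V → ℝ) (α β γ : ℝ) (hα : 0 < α) (hγ : 0 < γ)
    (hjest : ∀ (a₁ a₂ : Z) (b₁ b₂ : V) (c₁ c₂ : ℝ), ∀ d₁ ∈ KV, ∀ d₂ ∈ KV,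
      j a₁ b₁ c₁ d₂ - j a₁ b₁ c₁ d₁ + j a₂ b₂ c₂ d₁ - j a₂ b₂ c₂ d₂ ≤
        α * ‖a₁ - a₂‖ * ‖d₁ - d₂‖ + β * ‖b₁ - b₂‖ * ‖d₁ - d₂‖ +
          γ * |c₁ - c₂| * ‖d₁ - d₂‖)
    -- H(R)
    (R : C(Set.Icc (0:ℝ) T, V) → C(Set.Icc (0:ℝ) T, Y₁) → C(Set.Icc (0:ℝ) T, X))
    (r₁ r₂ : ℝ)
    (hR₁ : ∀ (a₁ a₂ : C(Set.Icc (0:ℝ) T, V)) (b : C(Set.Icc (0:ℝ) T, Y₁)),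
      (∀ t, a₁ t ∈ KV) → (∀ t, a₂ t ∈ KV) → (∀ t, b t ∈ KY) →
      ∀ t : Set.Icc (0:ℝ) T, ‖R a₁ b t - R a₂ b t‖ ≤
        r₁ * ∫ σ in (0:ℝ)..(t:ℝ),
          ‖a₁ (Set.projIcc 0 T hT.le σ) - a₂ (Set.projIcc 0 T hT.le σ)‖)
    (hR₂ : ∀ (a : C(Set.Icc (0:ℝ) T, V)) (b₁ b₂ : C(Set.Icc (0:ℝ) T, Y₁)),
      (∀ t, a t ∈ KV) → (∀ t, b₁ t ∈ KY) → (∀ t, b₂ t ∈ KY) →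
      ∀ t : Set.Icc (0:ℝ) T, ‖R a b₁ t - R a b₂ t‖ ≤
        r₂ * ∫ σ in (0:ℝ)..(t:ℝ),
          ‖b₁ (Set.projIcc 0 T hT.le σ) - b₂ (Set.projIcc 0 T hT.le σ)‖)
    -- H(S)
    (S : C(Set.Icc (0:ℝ) T, V) → C(Set.Icc (0:ℝ) T, Z)) (s : ℝ)
    (hS : ∀ (a₁ a₂ : C(Set.Icc (0:ℝ) T, V)),
      (∀ t, a₁ t ∈ KV) → (∀ t, a₂ t ∈ KV) →
      ∀ t : Set.Icc (0:ℝ) T, ‖S a₁ t - S a₂ t‖ ≤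
        s * ∫ σ in (0:ℝ)..(t:ℝ),
          ‖a₁ (Set.projIcc 0 T hT.le σ) - a₂ (Set.projIcc 0 T hT.le σ)‖)
    -- smallness condition
    (hmβ : β < m)
    -- fixed data
    (f : C(Set.Icc (0:ℝ) T, V))
    -- the two data sets and corresponding solutions
    (ξ₁ ξ₂ : C(Set.Icc (0:ℝ) T, Y₁)) (hξ₁ : ∀ t, ξ₁ t ∈ KY) (hξ₂ : ∀ t, ξ₂ t ∈ KY)
    (w₁ w₂ : C(Set.Icc (0:ℝ) T, ℝ))
    (η₁ η₂ : C(Set.Icc (0:ℝ) T, V))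
    (hη₁ : ∀ t, η₁ t ∈ KV) (hη₂ : ∀ t, η₂ t ∈ KV)
    (hvi₁ : ∀ t : Set.Icc (0:ℝ) T, ∀ v ∈ KV,
      (inner ℝ (A (R η₁ ξ₁ t) (η₁ t)) (v - η₁ t) : ℝ) +
          j (S η₁ t) (η₁ t) (w₁ t) v - j (S η₁ t) (η₁ t) (w₁ t) (η₁ t) ≥
        (inner ℝ (f t) (v - η₁ t) : ℝ))
    (hvi₂ : ∀ t : Set.Icc (0:ℝ) T, ∀ v ∈ KV,
      (inner ℝ (A (R η₂ ξ₂ t) (η₂ t)) (v - η₂ t) : ℝ) +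
          j (S η₂ t) (η₂ t) (w₂ t) v - j (S η₂ t) (η₂ t) (w₂ t) (η₂ t) ≥
        (inner ℝ (f t) (v - η₂ t) : ℝ)) :
    ∀ t : Set.Icc (0:ℝ) T,
      ‖η₁ t - η₂ t‖ ≤
        ((L₁ * r₁ + α * s) / (m - β)) * (∫ σ in (0:ℝ)..(t:ℝ),
            ‖η₁ (Set.projIcc 0 T hT.le σ) - η₂ (Set.projIcc 0 T hT.le σ)‖) +
          (L₁ * r₂ / (m - β)) * (∫ σ in (0:ℝ)..(t:ℝ),
            ‖ξ₁ (Set.projIcc 0 T hT.le σ) - ξ₂ (Set.projIcc 0 T hT.le σ)‖) +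
          (γ / (m - β)) * |w₁ t - w₂ t| := by
  intro t
  set Iη := ∫ σ in (0:ℝ)..(t:ℝ),
    ‖η₁ (Set.projIcc 0 T hT.le σ) - η₂ (Set.projIcc 0 T hT.le σ)‖
  set Iξ := ∫ σ in (0:ℝ)..(t:ℝ),
    ‖ξ₁ (Set.projIcc 0 T hT.le σ) - ξ₂ (Set.projIcc 0 T hT.le σ)‖
  set d := ‖η₁ t - η₂ t‖
  have hR : ‖R η₁ ξ₁ t - R η₂ ξ₂ t‖ ≤ r₁ * Iη + r₂ * Iξ :=
    (norm_sub_le_norm_sub_add_norm_sub _ (R η₂ ξ₁ t) _).trans <|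
      add_le_add (hR₁ η₁ η₂ ξ₁ hη₁ hη₂ hξ₁ t) (hR₂ η₂ ξ₁ ξ₂ hη₂ hξ₁ hξ₂ t)
  have hvi : m * d ^ 2 ≤ (L₁ * ‖R η₁ ξ₁ t - R η₂ ξ₂ t‖ +
      (α * ‖S η₁ t - S η₂ t‖ + β * d + γ * |w₁ t - w₂ t|)) * d :=
    mul_norm_sub_sq_le_of_variationalInequality (hvi₁ t _ (hη₂ t)) (hvi₂ t _ (hη₁ t))
      (hA₃ _ _ (hη₁ t) _ (hη₂ t)) (hA₁ _ _ _ (hη₂ t))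
      ((hjest _ _ _ _ _ _ _ (hη₁ t) _ (hη₂ t)).trans_eq (by ring))
  have hkey : (m - β) * d ≤
      L₁ * ‖R η₁ ξ₁ t - R η₂ ξ₂ t‖ + α * ‖S η₁ t - S η₂ t‖ + γ * |w₁ t - w₂ t| := by
    rcases (norm_nonneg _ : 0 ≤ d).eq_or_lt with hd | hd
    · rw [show d = 0 from hd.symm, mul_zero]
      positivity
    · exact le_of_mul_le_mul_right (by linarith) hd
  have hS_le := mul_le_mul_of_nonneg_left (hS η₁ η₂ hη₁ hη₂ t) hα.le
  have hR_le := mul_le_mul_of_nonneg_left hR hL₁.le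
  have hmβ' : 0 < m - β := sub_pos.mpr hmβ
  calc d = (m - β) * d / (m - β) := (mul_div_cancel_left₀ d hmβ'.ne').symm
    _ ≤ ((L₁ * r₁ + α * s) * Iη + L₁ * r₂ * Iξ + γ * |w₁ t - w₂ t|) / (m - β) := by
      gcongr; linarith
    _ = _ := by ring

/-- The estimate from the proof of Theorem 3.3: if `ηᵢ` solves the
quasivariational inequality with data `(ξᵢ, wᵢ)` (`i = 1, 2`) and `m > β`, then
for all `t ∈ I`,
`‖η₁(t) − η₂(t)‖ ≤ ((L₁r₁ + αs)/(m − β)) ∫₀ᵗ‖η₁ − η₂‖ +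
(L₁r₂/(m − β)) ∫₀ᵗ‖ξ₁ − ξ₂‖ + (γ/(m − β))|w₁(t) − w₂(t)|`. -/
theorem stmt7
    {V : Type*} [NormedAddCommGroup V] [InnerProductSpace ℝ V] [CompleteSpace V]
    {X : Type*} [NormedAddCommGroup X] [NormedSpace ℝ X] [CompleteSpace X]
    {Z : Type*} [NormedAddCommGroup Z] [NormedSpace ℝ Z] [CompleteSpace Z]
    {Y₁ : Type*} [NormedAddCommGroup Y₁] [InnerProductSpace ℝ Y₁] [CompleteSpace Y₁]
    (T : ℝ) (hT : 0 < T)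
    (KV : Set V) (hKVne : KV.Nonempty) (hKVcl : IsClosed KV) (hKVcv : Convex ℝ KV)
    (KY : Set Y₁) (hKYne : KY.Nonempty) (hKYcv : Convex ℝ KY)
    -- H(A)
    (A : X → V → V) (L₁ L₂ m : ℝ) (hL₁ : 0 < L₁) (hL₂ : 0 < L₂) (hm : 0 < m)
    (hA₁ : ∀ (a₁ a₂ : X), ∀ b ∈ KV, ‖A a₁ b - A a₂ b‖ ≤ L₁ * ‖a₁ - a₂‖)
    (hA₂ : ∀ (a : X), ∀ b₁ ∈ KV, ∀ b₂ ∈ KV, ‖A a b₁ - A a b₂‖ ≤ L₂ * ‖b₁ - b₂‖)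
    (hA₃ : ∀ (a : X), ∀ b₁ ∈ KV, ∀ b₂ ∈ KV,
      m * ‖b₁ - b₂‖ ^ 2 ≤ (inner ℝ (A a b₁ - A a b₂) (b₁ - b₂) : ℝ))
    -- H(j)
    (j : Z → V → ℝ → V → ℝ) (α β γ : ℝ) (hα : 0 < α) (hβ : 0 < β) (hγ : 0 < γ)
    (hjcv : ∀ (a : Z) (b : V) (c : ℝ), ConvexOn ℝ KV (j a b c))
    (hjlsc : ∀ (a : Z) (b : V) (c : ℝ), LowerSemicontinuousOn (j a b c) KV)
    (hjest : ∀ (a₁ a₂ : Z) (b₁ b₂ : V) (c₁ c₂ : ℝ), ∀ d₁ ∈ KV, ∀ d₂ ∈ KV,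
      j a₁ b₁ c₁ d₂ - j a₁ b₁ c₁ d₁ + j a₂ b₂ c₂ d₁ - j a₂ b₂ c₂ d₂ ≤
        α * ‖a₁ - a₂‖ * ‖d₁ - d₂‖ + β * ‖b₁ - b₂‖ * ‖d₁ - d₂‖ +
          γ * |c₁ - c₂| * ‖d₁ - d₂‖)
    -- H(R)
    (R : C(Set.Icc (0:ℝ) T, V) → C(Set.Icc (0:ℝ) T, Y₁) → C(Set.Icc (0:ℝ) T, X))
    (r₁ r₂ : ℝ) (hr₁ : 0 < r₁) (hr₂ : 0 < r₂)
    (hR₁ : ∀ (a₁ a₂ : C(Set.Icc (0:ℝ) T, V)) (b : C(Set.Icc (0:ℝ) T, Y₁)),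
      (∀ t, a₁ t ∈ KV) → (∀ t, a₂ t ∈ KV) → (∀ t, b t ∈ KY) →
      ∀ t : Set.Icc (0:ℝ) T, ‖R a₁ b t - R a₂ b t‖ ≤
        r₁ * ∫ σ in (0:ℝ)..(t:ℝ),
          ‖a₁ (Set.projIcc 0 T hT.le σ) - a₂ (Set.projIcc 0 T hT.le σ)‖)
    (hR₂ : ∀ (a : C(Set.Icc (0:ℝ) T, V)) (b₁ b₂ : C(Set.Icc (0:ℝ) T, Y₁)),
      (∀ t, a t ∈ KV) → (∀ t, b₁ t ∈ KY) → (∀ t, b₂ t ∈ KY) →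
      ∀ t : Set.Icc (0:ℝ) T, ‖R a b₁ t - R a b₂ t‖ ≤
        r₂ * ∫ σ in (0:ℝ)..(t:ℝ),
          ‖b₁ (Set.projIcc 0 T hT.le σ) - b₂ (Set.projIcc 0 T hT.le σ)‖)
    -- H(S)
    (S : C(Set.Icc (0:ℝ) T, V) → C(Set.Icc (0:ℝ) T, Z)) (s : ℝ) (hs : 0 < s)
    (hS : ∀ (a₁ a₂ : C(Set.Icc (0:ℝ) T, V)),
      (∀ t, a₁ t ∈ KV) → (∀ t, a₂ t ∈ KV) →
      ∀ t : Set.Icc (0:ℝ) T, ‖S a₁ t - S a₂ t‖ ≤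
        s * ∫ σ in (0:ℝ)..(t:ℝ),
          ‖a₁ (Set.projIcc 0 T hT.le σ) - a₂ (Set.projIcc 0 T hT.le σ)‖)
    -- smallness condition
    (hmβ : β < m)
    -- fixed data
    (f : C(Set.Icc (0:ℝ) T, V))
    -- the two data sets and corresponding solutions
    (ξ₁ ξ₂ : C(Set.Icc (0:ℝ) T, Y₁)) (hξ₁ : ∀ t, ξ₁ t ∈ KY) (hξ₂ : ∀ t, ξ₂ t ∈ KY)
    (w₁ w₂ : C(Set.Icc (0:ℝ) T, ℝ))
    (η₁ η₂ : C(Set.Icc (0:ℝ) T, V))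
    (hη₁ : ∀ t, η₁ t ∈ KV) (hη₂ : ∀ t, η₂ t ∈ KV)
    (hvi₁ : ∀ t : Set.Icc (0:ℝ) T, ∀ v ∈ KV,
      (inner ℝ (A (R η₁ ξ₁ t) (η₁ t)) (v - η₁ t) : ℝ) +
          j (S η₁ t) (η₁ t) (w₁ t) v - j (S η₁ t) (η₁ t) (w₁ t) (η₁ t) ≥
        (inner ℝ (f t) (v - η₁ t) : ℝ))
    (hvi₂ : ∀ t : Set.Icc (0:ℝ) T, ∀ v ∈ KV,
      (inner ℝ (A (R η₂ ξ₂ t) (η₂ t)) (v - η₂ t) : ℝ) +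
          j (S η₂ t) (η₂ t) (w₂ t) v - j (S η₂ t) (η₂ t) (w₂ t) (η₂ t) ≥
        (inner ℝ (f t) (v - η₂ t) : ℝ)) :
    ∀ t : Set.Icc (0:ℝ) T,
      ‖η₁ t - η₂ t‖ ≤
        ((L₁ * r₁ + α * s) / (m - β)) * (∫ σ in (0:ℝ)..(t:ℝ),
            ‖η₁ (Set.projIcc 0 T hT.le σ) - η₂ (Set.projIcc 0 T hT.le σ)‖) +
          (L₁ * r₂ / (m - β)) * (∫ σ in (0:ℝ)..(t:ℝ),
            ‖ξ₁ (Set.projIcc 0 T hT.le σ) - ξ₂ (Set.projIcc 0 T hT.le σ)‖) +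
          (γ / (m - β)) * |w₁ t - w₂ t| :=
  stmt7_general T hT KV KY A L₁ m hL₁ hA₁ hA₃ j α β γ hα hγ hjest R r₁ r₂ hR₁ hR₂ S s hS hmβ f ξ₁ ξ₂
    hξ₁ hξ₂ w₁ w₂ η₁ η₂ hη₁ hη₂ hvi₁ hvi₂
end

section
/- Let (Γ, μ) be a finite measure space, d ≥ 1, V a real Hilbert space, ρ : V → L²(Γ; ℝᵈ) a bounded linear operator with operator norm ‖ρ‖, and ν : Γ → ℝᵈ a measurable field with ‖ν(x)‖ = 1 for a.e. x. For v ∈ V write v_ν(x) = ρv(x)·ν(x) and v_τ(x) = ρv(x) − v_ν(x)ν(x). Let g ∈ L²(Γ) with g ≥ 0 a.e., let p : ℝ → ℝ be Lipschitz with constant L_p > 0 and satisfy 0 ≤ p(r) ≤ p* for all r ∈ ℝ, and let μ̂ : [0,∞) × ℝ → ℝ satisfy 0 ≤ μ̂(b, c) ≤ μ* and |μ̂(b₁, c₁) − μ̂(b₂, c₂)| ≤ L_μ(|b₁ − b₂| + |c₁ − c₂|) for all arguments. Define j : L²(Γ) × V × ℝ × V → ℝ by j(z, u, w, v) = ∫_Γ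 p(z(x) − g(x)) v_ν(x) dμ(x) + ∫_Γ μ̂(‖u_τ(x)‖, w) p(z(x) − g(x)) ‖v_τ(x)‖ dμ(x). Then for all z₁, z₂ ∈ L²(Γ), u₁, u₂, d₁, d₂ ∈ V and w₁, w₂ ∈ ℝ: j(z₁,u₁,w₁,d₂) − j(z₁,u₁,w₁,d₁) + j(z₂,u₂,w₂,d₁) − j(z₂,u₂,w₂,d₂) ≤ L_p‖ρ‖(1 + μ*)‖z₁ − z₂‖_{L²(Γ)}‖d₁ − d₂‖_V + L_μ p*‖ρ‖²‖u₁ − u₂‖_V‖d₁ − d₂‖_V + L_μ p*‖ρ‖ μ(Γ)^{1/2} |w₁ − w₂| ‖d₁ − d₂‖_V. -/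
/-!
Pointwise, with `a_i = ρ d_i`, the defect
`j(z₁,u₁,w₁,d₂) - j(z₁,u₁,w₁,d₁) + j(z₂,u₂,w₂,d₁) - j(z₂,u₂,w₂,d₂)` regroups as
`(p₁ - p₂) (a₂ - a₁)·ν + (μ̂₁ p₁ - μ̂₂ p₂) (‖(a₂)_τ‖ - ‖(a₁)_τ‖)`, where `p_i = p(z_i - g)` and
`μ̂_i = μ̂(‖(u_i)_τ‖, w_i)`. Since `ν` is a unit vector, both the normal component and the
tangential projection are 1-Lipschitz, so the second factors are at most `‖a₁ - a₂‖`, while the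
first factors are controlled by the Lipschitz constants and the bounds `p*`, `μ*`. Integrating
and applying Cauchy–Schwarz in `L²(Γ)` together with `‖ρ v‖ ≤ ‖ρ‖ ‖v‖` gives the three terms.
-/

open MeasureTheory
open scoped RealInnerProductSpace

lemma lipschitzOnWith_of_abs_sub_le {f : ℝ → ℝ} {s : Set ℝ} {L : ℝ}
    (h : ∀ x ∈ s, ∀ y ∈ s, |f x - f y| ≤ L * |x - y|) :
    LipschitzOnWith (Real.toNNReal L) f s := by
  refine LipschitzOnWith.of_dist_le_mul fun x hx y hy => ?_
  rw [Real.dist_eq, Real.dist_eq]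
  exact (h x hx y hy).trans (mul_le_mul_of_nonneg_right (Real.le_coe_toNNReal L) (abs_nonneg _))

lemma abs_mul_sub_mul_le (x₁ x₂ y₁ y₂ : ℝ) :
    |x₁ * y₁ - x₂ * y₂| ≤ |x₁| * |y₁ - y₂| + |x₁ - x₂| * |y₂| := by
  calc |x₁ * y₁ - x₂ * y₂| = |x₁ * (y₁ - y₂) + (x₁ - x₂) * y₂| := by ring_nf
    _ ≤ _ := by rw [← abs_mul, ← abs_mul]; exact abs_add_le _ _

section Pointwise

variable {E : Type*} [NormedAddCommGroup E] [InnerProductSpace ℝ E]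

def tangentialPart (n a : E) : E := a - ⟪a, n⟫ • n

lemma tangentialPart_sub (n a b : E) :
    tangentialPart n a - tangentialPart n b = tangentialPart n (a - b) := by
  simp only [tangentialPart, inner_sub_left, sub_smul]; abel

lemma abs_inner_le_of_norm_eq_one {n : E} (hn : ‖n‖ = 1) (a : E) : |⟪a, n⟫| ≤ ‖a‖ := by
  simpa [hn] using abs_real_inner_le_norm a n

lemma norm_tangentialPart_le {n : E} (hn : ‖n‖ = 1) (a : E) : ‖tangentialPart n a‖ ≤ ‖a‖ := by
  -- Pythagoras: `‖a - ⟪a, n⟫ n‖² = ‖a‖² - ⟪a, n⟫²`.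
  refine (sq_le_sq₀ (norm_nonneg _) (norm_nonneg _)).1 ?_
  rw [tangentialPart, norm_sub_sq_real, real_inner_smul_right, norm_smul, mul_pow,
    Real.norm_eq_abs, sq_abs, hn]
  nlinarith [sq_nonneg ⟪a, n⟫]

lemma abs_norm_tangentialPart_sub_le {n : E} (hn : ‖n‖ = 1) (a b : E) :
    |‖tangentialPart n a‖ - ‖tangentialPart n b‖| ≤ ‖a - b‖ :=
  (abs_norm_sub_norm_le _ _).trans <| tangentialPart_sub n a b ▸ norm_tangentialPart_le hn _

variable {p : ℝ → ℝ} {μf : ℝ → ℝ → ℝ} {Lp' pstar Lμ μstar : ℝ}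

/-- The integrand of the friction functional at a point with unit normal `n`, where `r = z - g`,
`b = ρu` and `a = ρv`. -/
def frictionDensity (p : ℝ → ℝ) (μf : ℝ → ℝ → ℝ) (n : E) (r : ℝ) (b : E) (w : ℝ) (a : E) : ℝ :=
  p r * ⟪a, n⟫ + μf ‖tangentialPart n b‖ w * p r * ‖tangentialPart n a‖

lemma frictionDensity_sub_add_sub_le (hplip : ∀ r₁ r₂, |p r₁ - p r₂| ≤ Lp' * |r₁ - r₂|)
    (hpbd : ∀ r, |p r| ≤ pstar) (hμbd : ∀ b c, 0 ≤ b → |μf b c| ≤ μstar)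
    (hμlip : ∀ b₁ b₂ c₁ c₂, 0 ≤ b₁ → 0 ≤ b₂ →
      |μf b₁ c₁ - μf b₂ c₂| ≤ Lμ * (|b₁ - b₂| + |c₁ - c₂|)) (hLμ : 0 ≤ Lμ)
    {n : E} (hn : ‖n‖ = 1) (r₁ r₂ w₁ w₂ : ℝ) (b₁ b₂ a₁ a₂ : E) :
    frictionDensity p μf n r₁ b₁ w₁ a₂ - frictionDensity p μf n r₁ b₁ w₁ a₁
        + frictionDensity p μf n r₂ b₂ w₂ a₁ - frictionDensity p μf n r₂ b₂ w₂ a₂ ≤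
      (Lp' * (1 + μstar) * |r₁ - r₂| + Lμ * pstar * ‖b₁ - b₂‖ + Lμ * pstar * |w₁ - w₂|)
        * ‖a₁ - a₂‖ := by
  set M₁ := μf ‖tangentialPart n b₁‖ w₁
  set M₂ := μf ‖tangentialPart n b₂‖ w₂
  have hP := hplip r₁ r₂
  have hM : |M₁ - M₂| ≤ Lμ * (‖b₁ - b₂‖ + |w₁ - w₂|) :=
    (hμlip _ _ _ _ (norm_nonneg _) (norm_nonneg _)).trans <| by
      gcongr; exact abs_norm_tangentialPart_sub_le hn b₁ b₂
  have hN : |⟪a₂, n⟫ - ⟪a₁, n⟫| ≤ ‖a₁ - a₂‖ := by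
    rw [← inner_sub_left, ← norm_neg, neg_sub]; exact abs_inner_le_of_norm_eq_one hn _
  have hT : |‖tangentialPart n a₂‖ - ‖tangentialPart n a₁‖| ≤ ‖a₁ - a₂‖ := by
    rw [abs_sub_comm]; exact abs_norm_tangentialPart_sub_le hn a₁ a₂
  have hsplit : frictionDensity p μf n r₁ b₁ w₁ a₂ - frictionDensity p μf n r₁ b₁ w₁ a₁
        + frictionDensity p μf n r₂ b₂ w₂ a₁ - frictionDensity p μf n r₂ b₂ w₂ a₂ =
      (p r₁ - p r₂) * (⟪a₂, n⟫ - ⟪a₁, n⟫)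
        + (M₁ * p r₁ - M₂ * p r₂) * (‖tangentialPart n a₂‖ - ‖tangentialPart n a₁‖) := by
    simp only [frictionDensity]; ring
  have hMP : |M₁ * p r₁ - M₂ * p r₂| ≤
      μstar * (Lp' * |r₁ - r₂|) + Lμ * (‖b₁ - b₂‖ + |w₁ - w₂|) * pstar :=
    (abs_mul_sub_mul_le _ _ _ _).trans <| add_le_add
      (mul_le_mul (hμbd _ _ (norm_nonneg _)) hP (abs_nonneg _)
        ((abs_nonneg _).trans (hμbd 0 0 le_rfl)))
      (mul_le_mul hM (hpbd _) (abs_nonneg _) (by positivity))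
  rw [hsplit]
  calc _ ≤ |p r₁ - p r₂| * |⟪a₂, n⟫ - ⟪a₁, n⟫|
        + |M₁ * p r₁ - M₂ * p r₂| * |‖tangentialPart n a₂‖ - ‖tangentialPart n a₁‖| := by
        rw [← abs_mul, ← abs_mul]; exact add_le_add (le_abs_self _) (le_abs_self _)
    _ ≤ Lp' * |r₁ - r₂| * ‖a₁ - a₂‖
        + (μstar * (Lp' * |r₁ - r₂|) + Lμ * (‖b₁ - b₂‖ + |w₁ - w₂|) * pstar) * ‖a₁ - a₂‖ := by
        gcongr
        · exact (abs_nonneg _).trans hP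
        · exact (abs_nonneg _).trans hMP
    _ = _ := by ring

end Pointwise

section Integrals

variable {Γ : Type*} [MeasurableSpace Γ] {μ : Measure Γ}

lemma integral_norm_mul_norm_le_of_memLp {E F : Type*} [NormedAddCommGroup E]
    [NormedAddCommGroup F] {f : Γ → E} {g : Γ → F} (hf : MemLp f 2 μ) (hg : MemLp g 2 μ) :
    ∫ x, ‖f x‖ * ‖g x‖ ∂μ ≤ (eLpNorm f 2 μ).toReal * (eLpNorm g 2 μ).toReal := by
  have h2 : ENNReal.ofReal 2 = 2 := by norm_num
  have hcs := integral_mul_norm_le_Lp_mul_Lq (μ := μ) Real.HolderConjugate.two_two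
    (h2 ▸ hf.norm) (h2 ▸ hg.norm)
  simp only [norm_norm] at hcs
  rw [hf.eLpNorm_eq_integral_rpow_norm two_ne_zero ENNReal.ofNat_ne_top,
    hg.eLpNorm_eq_integral_rpow_norm two_ne_zero ENNReal.ofNat_ne_top,
    ENNReal.toReal_ofReal (by positivity), ENNReal.toReal_ofReal (by positivity),
    ENNReal.toReal_ofNat]
  simpa only [one_div] using hcs

lemma MeasureTheory.Lp.integral_norm_mul_norm_le {E F : Type*} [NormedAddCommGroup E]
    [NormedAddCommGroup F] (f : Lp E 2 μ) (g : Lp F 2 μ) : ∫ x, ‖f x‖ * ‖g x‖ ∂μ ≤ ‖f‖ * ‖g‖ := by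
  simpa only [Lp.norm_def] using integral_norm_mul_norm_le_of_memLp (Lp.memLp f) (Lp.memLp g)

lemma MeasureTheory.Lp.integral_norm_le_sqrt_measure_mul {E : Type*} [NormedAddCommGroup E]
    [IsFiniteMeasure μ] (f : Lp E 2 μ) : ∫ x, ‖f x‖ ∂μ ≤ √(μ Set.univ).toReal * ‖f‖ := by
  have hone : (eLpNorm (fun _ : Γ => (1 : ℝ)) 2 μ).toReal = √(μ Set.univ).toReal := by
    rw [eLpNorm_const' _ two_ne_zero ENNReal.ofNat_ne_top, enorm_one, one_mul,
      ← ENNReal.toReal_rpow, Real.sqrt_eq_rpow]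
    norm_num
  simpa [hone, ← Lp.norm_def] using
    integral_norm_mul_norm_le_of_memLp (memLp_const (1 : ℝ)) (Lp.memLp f)

lemma MeasureTheory.Lp.integrable_norm_mul_norm {E F : Type*} [NormedAddCommGroup E]
    [NormedAddCommGroup F] (f : Lp E 2 μ) (g : Lp F 2 μ) : Integrable (fun x => ‖f x‖ * ‖g x‖) μ :=
  (Lp.memLp f).norm.integrable_mul (Lp.memLp g).norm

lemma integral_sub_add_sub_le {f₁ f₂ f₃ f₄ G : Γ → ℝ} (h₁ : Integrable f₁ μ) (h₂ : Integrable f₂ μ)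
    (h₃ : Integrable f₃ μ) (h₄ : Integrable f₄ μ) (hG : Integrable G μ)
    (h : ∀ᵐ x ∂μ, f₁ x - f₂ x + f₃ x - f₄ x ≤ G x) :
    ∫ x, f₁ x ∂μ - ∫ x, f₂ x ∂μ + ∫ x, f₃ x ∂μ - ∫ x, f₄ x ∂μ ≤ ∫ x, G x ∂μ := by
  have := integral_mono_ae (((h₁.sub h₂).add h₃).sub h₄) hG h
  rwa [integral_sub' ((h₁.sub h₂).add h₃) h₄, integral_add' (h₁.sub h₂) h₃,
    integral_sub' h₁ h₂] at this

end Integrals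

section FrictionFunctional

variable {Γ : Type*} [MeasurableSpace Γ] {μ : Measure Γ}
  {E : Type*} [NormedAddCommGroup E] [InnerProductSpace ℝ E]
  {p : ℝ → ℝ} {μf : ℝ → ℝ → ℝ} {Lp' pstar Lμ μstar : ℝ} {n a b : Γ → E} {r : Γ → ℝ}

lemma integrable_mul_inner (hp : Continuous p) (hpbd : ∀ r, |p r| ≤ pstar)
    (hn : AEStronglyMeasurable n μ) (hn1 : ∀ᵐ x ∂μ, ‖n x‖ = 1)
    (hr : AEStronglyMeasurable r μ) (ha : Integrable a μ) :
    Integrable (fun x => p (r x) * ⟪a x, n x⟫) μ := by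
  refine (ha.norm.mono' (ha.aestronglyMeasurable.inner hn) ?_).bdd_mul
    (hp.comp_aestronglyMeasurable hr) (.of_forall fun x => hpbd (r x))
  filter_upwards [hn1] with x hx
  exact abs_inner_le_of_norm_eq_one hx _

lemma integrable_mul_norm_tangentialPart (hp : Continuous p) (hpbd : ∀ r, |p r| ≤ pstar)
    {w : ℝ} (hμ : ContinuousOn (μf · w) (Set.Ici 0)) (hμbd : ∀ b c, 0 ≤ b → |μf b c| ≤ μstar)
    (hn : AEStronglyMeasurable n μ) (hn1 : ∀ᵐ x ∂μ, ‖n x‖ = 1)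
    (hr : AEStronglyMeasurable r μ) (hb : AEStronglyMeasurable b μ) (ha : Integrable a μ) :
    Integrable (fun x => μf ‖tangentialPart (n x) (b x)‖ w * p (r x) *
      ‖tangentialPart (n x) (a x)‖) μ := by
  have htan {c : Γ → E} (hc : AEStronglyMeasurable c μ) :
      AEStronglyMeasurable (fun x => tangentialPart (n x) (c x)) μ :=
    hc.sub ((hc.inner hn).smul hn)
  have hμm : AEStronglyMeasurable (fun x => μf ‖tangentialPart (n x) (b x)‖ w) μ :=
    (hμ.comp_continuous continuous_norm fun y => norm_nonneg y).comp_aestronglyMeasurable (htan hb)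
  refine (ha.norm.mono' (htan ha.aestronglyMeasurable).norm ?_).bdd_mul
    (hμm.mul (hp.comp_aestronglyMeasurable hr)) (.of_forall fun x => ?_) (c := μstar * pstar)
  · filter_upwards [hn1] with x hx
    simpa using norm_tangentialPart_le hx (a x)
  · rw [norm_mul]
    exact mul_le_mul (hμbd _ _ (norm_nonneg _)) (hpbd _) (norm_nonneg _)
      ((abs_nonneg _).trans (hμbd 0 0 le_rfl))

variable {V : Type*} [NormedAddCommGroup V] [NormedSpace ℝ V]

noncomputable def frictionFunctional (p : ℝ → ℝ) (μf : ℝ → ℝ → ℝ) (ν : Γ → E) (g : Γ → ℝ)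
    (ρ : V →L[ℝ] Lp E 2 μ) (z : Lp ℝ 2 μ) (u : V) (w : ℝ) (v : V) : ℝ :=
  ∫ x, frictionDensity p μf (ν x) (z x - g x) (ρ u x) w (ρ v x) ∂μ

variable [IsFiniteMeasure μ] {ν : Γ → E} {g : Γ → ℝ}

lemma integrable_frictionTerms (hplip : ∀ r₁ r₂, |p r₁ - p r₂| ≤ Lp' * |r₁ - r₂|)
    (hpbd : ∀ r, |p r| ≤ pstar) (hμbd : ∀ b c, 0 ≤ b → |μf b c| ≤ μstar)
    (hμlip : ∀ b₁ b₂ c₁ c₂, 0 ≤ b₁ → 0 ≤ b₂ →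
      |μf b₁ c₁ - μf b₂ c₂| ≤ Lμ * (|b₁ - b₂| + |c₁ - c₂|))
    (hν : AEStronglyMeasurable ν μ) (hν1 : ∀ᵐ x ∂μ, ‖ν x‖ = 1) (hg : AEStronglyMeasurable g μ)
    (ρ : V →L[ℝ] Lp E 2 μ) (z : Lp ℝ 2 μ) (u : V) (w : ℝ) (v : V) :
    Integrable (fun x => p (z x - g x) * ⟪ρ v x, ν x⟫) μ ∧
      Integrable (fun x => μf ‖tangentialPart (ν x) (ρ u x)‖ w * p (z x - g x) *
        ‖tangentialPart (ν x) (ρ v x)‖) μ := by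
  have hp : Continuous p :=
    (lipschitzOnWith_univ.1 (lipschitzOnWith_of_abs_sub_le fun x _ y _ => hplip x y)).continuous
  have hμ : ContinuousOn (μf · w) (Set.Ici 0) :=
    (lipschitzOnWith_of_abs_sub_le fun x hx y hy => by
      simpa using hμlip x y w w hx hy).continuousOn
  have hr := (Lp.aestronglyMeasurable z).sub hg
  have ha := (Lp.memLp (ρ v)).integrable one_le_two
  exact ⟨integrable_mul_inner hp hpbd hν hν1 hr ha,
    integrable_mul_norm_tangentialPart hp hpbd hμ hμbd hν hν1 hr
      (Lp.aestronglyMeasurable (ρ u)) ha⟩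

theorem frictionFunctional_sub_add_sub_le
    (hplip : ∀ r₁ r₂, |p r₁ - p r₂| ≤ Lp' * |r₁ - r₂|)
    (hpbd : ∀ r, |p r| ≤ pstar) (hμbd : ∀ b c, 0 ≤ b → |μf b c| ≤ μstar)
    (hμlip : ∀ b₁ b₂ c₁ c₂, 0 ≤ b₁ → 0 ≤ b₂ →
      |μf b₁ c₁ - μf b₂ c₂| ≤ Lμ * (|b₁ - b₂| + |c₁ - c₂|))
    (hν : AEStronglyMeasurable ν μ) (hν1 : ∀ᵐ x ∂μ, ‖ν x‖ = 1) (hg : AEStronglyMeasurable g μ)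
    (ρ : V →L[ℝ] Lp E 2 μ) (z₁ z₂ : Lp ℝ 2 μ) (u₁ u₂ d₁ d₂ : V) (w₁ w₂ : ℝ) :
    frictionFunctional p μf ν g ρ z₁ u₁ w₁ d₂ - frictionFunctional p μf ν g ρ z₁ u₁ w₁ d₁
        + frictionFunctional p μf ν g ρ z₂ u₂ w₂ d₁ - frictionFunctional p μf ν g ρ z₂ u₂ w₂ d₂ ≤
      Lp' * ‖ρ‖ * (1 + μstar) * ‖z₁ - z₂‖ * ‖d₁ - d₂‖ +
        Lμ * pstar * ‖ρ‖ ^ 2 * ‖u₁ - u₂‖ * ‖d₁ - d₂‖ +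
        Lμ * pstar * ‖ρ‖ * √(μ Set.univ).toReal * |w₁ - w₂| * ‖d₁ - d₂‖ := by
  have hLp' : 0 ≤ Lp' := by simpa using (abs_nonneg _).trans (hplip 1 0)
  have hLμ : 0 ≤ Lμ := by simpa using (abs_nonneg _).trans (hμlip 1 0 0 0 zero_le_one le_rfl)
  have hpstar : 0 ≤ pstar := (abs_nonneg _).trans (hpbd 0)
  have hμstar : 0 ≤ μstar := (abs_nonneg _).trans (hμbd 0 0 le_rfl)
  have hF (z : Lp ℝ 2 μ) (u : V) (w : ℝ) (v : V) :
      Integrable (fun x => frictionDensity p μf (ν x) (z x - g x) (ρ u x) w (ρ v x)) μ :=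
    let h := integrable_frictionTerms hplip hpbd hμbd hμlip hν hν1 hg ρ z u w v
    h.1.add h.2
  set δ := ρ (d₁ - d₂)
  have hpt : ∀ᵐ x ∂μ,
      frictionDensity p μf (ν x) (z₁ x - g x) (ρ u₁ x) w₁ (ρ d₂ x)
        - frictionDensity p μf (ν x) (z₁ x - g x) (ρ u₁ x) w₁ (ρ d₁ x)
        + frictionDensity p μf (ν x) (z₂ x - g x) (ρ u₂ x) w₂ (ρ d₁ x)
        - frictionDensity p μf (ν x) (z₂ x - g x) (ρ u₂ x) w₂ (ρ d₂ x) ≤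
      Lp' * (1 + μstar) * (‖(z₁ - z₂) x‖ * ‖δ x‖) + Lμ * pstar * (‖ρ (u₁ - u₂) x‖ * ‖δ x‖)
        + Lμ * pstar * |w₁ - w₂| * ‖δ x‖ := by
    filter_upwards [hν1, Lp.coeFn_sub z₁ z₂, map_sub ρ u₁ u₂ ▸ Lp.coeFn_sub (ρ u₁) (ρ u₂),
      map_sub ρ d₁ d₂ ▸ Lp.coeFn_sub (ρ d₁) (ρ d₂)] with x hx hz hu hd
    refine (frictionDensity_sub_add_sub_le hplip hpbd hμbd hμlip hLμ hx
      _ _ w₁ w₂ _ _ _ _).trans_eq ?_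
    rw [hz, hu, hd, Pi.sub_apply, Pi.sub_apply, Pi.sub_apply, sub_sub_sub_cancel_right,
      Real.norm_eq_abs]
    ring
  have hI₁ := (Lp.integrable_norm_mul_norm (z₁ - z₂) δ).const_mul (Lp' * (1 + μstar))
  have hI₂ := (Lp.integrable_norm_mul_norm (ρ (u₁ - u₂)) δ).const_mul (Lμ * pstar)
  have hI₃ := ((Lp.memLp δ).integrable one_le_two).norm.const_mul (Lμ * pstar * |w₁ - w₂|)
  refine (integral_sub_add_sub_le (hF ..) (hF ..) (hF ..) (hF ..) ((hI₁.add hI₂).add hI₃)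
    hpt).trans ?_
  rw [integral_add' (hI₁.add hI₂) hI₃, integral_add' hI₁ hI₂, integral_const_mul,
    integral_const_mul, integral_const_mul]
  calc _ ≤ Lp' * (1 + μstar) * (‖z₁ - z₂‖ * ‖δ‖) + Lμ * pstar * (‖ρ (u₁ - u₂)‖ * ‖δ‖)
        + Lμ * pstar * |w₁ - w₂| * (√(μ Set.univ).toReal * ‖δ‖) := by
        gcongr
        exacts [Lp.integral_norm_mul_norm_le _ _, Lp.integral_norm_mul_norm_le _ _,
          Lp.integral_norm_le_sqrt_measure_mul _]
    _ ≤ Lp' * (1 + μstar) * (‖z₁ - z₂‖ * (‖ρ‖ * ‖d₁ - d₂‖))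
        + Lμ * pstar * (‖ρ‖ * ‖u₁ - u₂‖ * (‖ρ‖ * ‖d₁ - d₂‖))
        + Lμ * pstar * |w₁ - w₂| * (√(μ Set.univ).toReal * (‖ρ‖ * ‖d₁ - d₂‖)) := by
        gcongr <;> exact ρ.le_opNorm _
    _ = _ := by ring

end FrictionFunctional

theorem stmt12_general {Γ : Type*} [MeasurableSpace Γ] (μ : Measure Γ) [IsFiniteMeasure μ]
    (d : ℕ)
    {V : Type*} [NormedAddCommGroup V] [InnerProductSpace ℝ V]
    (ρ : V →L[ℝ] Lp (EuclideanSpace ℝ (Fin d)) 2 μ)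
    (ν : Γ → EuclideanSpace ℝ (Fin d)) (hν : Measurable ν)
    (hν1 : ∀ᵐ x ∂μ, ‖ν x‖ = 1)
    (g : Lp ℝ 2 μ)
    (p : ℝ → ℝ) (Lp' pstar : ℝ)
    (hplip : ∀ r₁ r₂ : ℝ, |p r₁ - p r₂| ≤ Lp' * |r₁ - r₂|)
    (hpbd : ∀ r : ℝ, 0 ≤ p r ∧ p r ≤ pstar)
    (μf : ℝ → ℝ → ℝ) (Lμ μstar : ℝ)
    (hμbd : ∀ b c : ℝ, 0 ≤ b → 0 ≤ μf b c ∧ μf b c ≤ μstar)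
    (hμlip : ∀ b₁ b₂ c₁ c₂ : ℝ, 0 ≤ b₁ → 0 ≤ b₂ →
      |μf b₁ c₁ - μf b₂ c₂| ≤ Lμ * (|b₁ - b₂| + |c₁ - c₂|))
    (j : Lp ℝ 2 μ → V → ℝ → V → ℝ)
    (hj : ∀ (z : Lp ℝ 2 μ) (u : V) (w : ℝ) (v : V),
      j z u w v =
        (∫ x, p (z x - g x) * (inner ℝ (ρ v x) (ν x) : ℝ) ∂μ) +
        ∫ x, μf (‖ρ u x - (inner ℝ (ρ u x) (ν x) : ℝ) • ν x‖) w *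
              p (z x - g x) *
              ‖ρ v x - (inner ℝ (ρ v x) (ν x) : ℝ) • ν x‖ ∂μ) :
    ∀ (z₁ z₂ : Lp ℝ 2 μ) (u₁ u₂ d₁ d₂ : V) (w₁ w₂ : ℝ),
      j z₁ u₁ w₁ d₂ - j z₁ u₁ w₁ d₁ + j z₂ u₂ w₂ d₁ - j z₂ u₂ w₂ d₂ ≤
        Lp' * ‖ρ‖ * (1 + μstar) * ‖z₁ - z₂‖ * ‖d₁ - d₂‖ +
        Lμ * pstar * ‖ρ‖ ^ 2 * ‖u₁ - u₂‖ * ‖d₁ - d₂‖ +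
        Lμ * pstar * ‖ρ‖ * Real.sqrt (μ Set.univ).toReal * |w₁ - w₂| * ‖d₁ - d₂‖ := by
  have hpbd' (r : ℝ) : |p r| ≤ pstar := (abs_of_nonneg (hpbd r).1).trans_le (hpbd r).2
  have hμbd' (b c : ℝ) (hb : 0 ≤ b) : |μf b c| ≤ μstar :=
    (abs_of_nonneg (hμbd b c hb).1).trans_le (hμbd b c hb).2
  have hg := Lp.aestronglyMeasurable g
  have hj' : j = frictionFunctional p μf ν g ρ := by
    funext z u w v
    have h := integrable_frictionTerms hplip hpbd' hμbd' hμlip hν.aestronglyMeasurable hν1 hg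
      ρ z u w v
    exact (hj z u w v).trans (integral_add h.1 h.2).symm
  subst hj'
  exact frictionFunctional_sub_add_sub_le hplip hpbd' hμbd' hμlip hν.aestronglyMeasurable hν1 hg ρ

/-- The estimate H(j)(b) for the friction functional
`j(z, u, w, v) = ∫_Γ p(z − g) v_ν dμ + ∫_Γ μ̂(‖u_τ‖, w) p(z − g) ‖v_τ‖ dμ`
of the wear contact problem, where `v_ν = ρv·ν`, `v_τ = ρv − v_ν ν`,
`p` is the normal compliance function (Lipschitz `L_p`, `0 ≤ p ≤ p*`),
`μ̂` is the friction coefficient (`0 ≤ μ̂ ≤ μ*`, Lipschitz `L_μ`),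
`g ≥ 0` is the gap and `ρ` the trace operator. -/
theorem stmt12 {Γ : Type*} [MeasurableSpace Γ] (μ : Measure Γ) [IsFiniteMeasure μ]
    (d : ℕ) (hd : 1 ≤ d)
    {V : Type*} [NormedAddCommGroup V] [InnerProductSpace ℝ V]
    (ρ : V →L[ℝ] Lp (EuclideanSpace ℝ (Fin d)) 2 μ)
    (ν : Γ → EuclideanSpace ℝ (Fin d)) (hν : Measurable ν)
    (hν1 : ∀ᵐ x ∂μ, ‖ν x‖ = 1)
    (g : Lp ℝ 2 μ) (hg : ∀ᵐ x ∂μ, 0 ≤ g x)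
    (p : ℝ → ℝ) (Lp' pstar : ℝ) (hLp' : 0 < Lp')
    (hplip : ∀ r₁ r₂ : ℝ, |p r₁ - p r₂| ≤ Lp' * |r₁ - r₂|)
    (hpbd : ∀ r : ℝ, 0 ≤ p r ∧ p r ≤ pstar)
    (μf : ℝ → ℝ → ℝ) (Lμ μstar : ℝ)
    (hμbd : ∀ b c : ℝ, 0 ≤ b → 0 ≤ μf b c ∧ μf b c ≤ μstar)
    (hμlip : ∀ b₁ b₂ c₁ c₂ : ℝ, 0 ≤ b₁ → 0 ≤ b₂ →
      |μf b₁ c₁ - μf b₂ c₂| ≤ Lμ * (|b₁ - b₂| + |c₁ - c₂|))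
    (j : Lp ℝ 2 μ → V → ℝ → V → ℝ)
    (hj : ∀ (z : Lp ℝ 2 μ) (u : V) (w : ℝ) (v : V),
      j z u w v =
        (∫ x, p (z x - g x) * (inner ℝ (ρ v x) (ν x) : ℝ) ∂μ) +
        ∫ x, μf (‖ρ u x - (inner ℝ (ρ u x) (ν x) : ℝ) • ν x‖) w *
              p (z x - g x) *
              ‖ρ v x - (inner ℝ (ρ v x) (ν x) : ℝ) • ν x‖ ∂μ) :
    ∀ (z₁ z₂ : Lp ℝ 2 μ) (u₁ u₂ d₁ d₂ : V) (w₁ w₂ : ℝ),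
      j z₁ u₁ w₁ d₂ - j z₁ u₁ w₁ d₁ + j z₂ u₂ w₂ d₁ - j z₂ u₂ w₂ d₂ ≤
        Lp' * ‖ρ‖ * (1 + μstar) * ‖z₁ - z₂‖ * ‖d₁ - d₂‖ +
        Lμ * pstar * ‖ρ‖ ^ 2 * ‖u₁ - u₂‖ * ‖d₁ - d₂‖ +
        Lμ * pstar * ‖ρ‖ * Real.sqrt (μ Set.univ).toReal * |w₁ - w₂| * ‖d₁ - d₂‖ :=
  stmt12_general μ d ρ ν hν hν1 g p Lp' pstar hplip hpbd μf Lμ μstar hμbd hμlip j hj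
end
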